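/- arXiv:2301.04953 — 5 statements merged into one kernel-verified Lean document; each statement's English description precedes it below -/
import Mathlib

section
/- The two inductive definitions of forts coincide. Define classes A(ℓ) and B(ℓ) of subsets of ℝ^ℓ inductively by: A(1)=B(1)={(0,n) : n a positive integer}; A(ℓ) consists of all sets ℱ¹⋉s := ⋃_{𝒞∈C(ℱ¹)} 𝒞×s(𝒞), where ℱ¹∈A(1) and s is a map from C(ℱ¹) to A(ℓ−1); B(ℓ) consists of all sets 𝒢⊙φ := {(x,x_ℓ) : x∈𝒢, 0<x_ℓ<φ(x)}, where 𝒢∈B(ℓ−1) and φ: 𝒢→ℕ_{≥1} is a function constant on each integer cell of 𝒢. Then A(ℓ)=B(ℓ) for every ℓ≥1. -/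
open Set

namespace Forts

/-- An integer cell of length 1: a singleton `{k}` or an open interval `(k, k+1)`, `k : ℤ`. -/
def Cell1 (S : Set ℝ) : Prop :=
  ∃ k : ℤ, S = {(k : ℝ)} ∨ S = Set.Ioo (k : ℝ) ((k : ℝ) + 1)

/-- An integer cell of length ℓ: a product of ℓ integer cells of length 1. -/
def Cell {ℓ : ℕ} (S : Set (Fin ℓ → ℝ)) : Prop :=
  ∃ c : Fin ℓ → Set ℝ, (∀ i, Cell1 (c i)) ∧ S = {x | ∀ i, x i ∈ c i}

/-- `cellsOf S` is the collection of integer cells contained in `S`. -/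
def cellsOf {ℓ : ℕ} (S : Set (Fin ℓ → ℝ)) : Set (Set (Fin ℓ → ℝ)) :=
  {C | Cell C ∧ C ⊆ S}

/-- Forts, defined inductively along the first coordinate: a fort of length 1 is an
interval `(0, n)` with `n ≥ 1`; given a fort `F1` of length 1 and an assignment `s` of a
fort of length ℓ to each integer cell of `F1`, the set `F1 ⋉ s = ⋃_{C ∈ C(F1)} C × s(C)`
is a fort of length `ℓ + 1`. -/
inductive Fort : (ℓ : ℕ) → Set (Fin ℓ → ℝ) → Prop
  | base (n : ℕ) (hn : 0 < n) : Fort 1 {x : Fin 1 → ℝ | x 0 ∈ Set.Ioo (0 : ℝ) (n : ℝ)}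
  | step {ℓ : ℕ} (F1 : Set (Fin 1 → ℝ)) (s : Set (Fin 1 → ℝ) → Set (Fin ℓ → ℝ))
      (hF1 : Fort 1 F1) (hs : ∀ C ∈ cellsOf F1, Fort ℓ (s C)) :
      Fort (ℓ + 1)
        {x : Fin (ℓ + 1) → ℝ | ∃ C ∈ cellsOf F1, (fun _ : Fin 1 => x 0) ∈ C ∧ Fin.tail x ∈ s C}

/-- A map between subsets of ℝ^ℓ is precellular if each coordinate function depends only on
the first `i` coordinates and is strictly increasing in the `i`-th coordinate. -/
def Precellular {ℓ : ℕ} (X : Set (Fin ℓ → ℝ)) (f : (Fin ℓ → ℝ) → (Fin ℓ → ℝ)) : Prop :=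
  (∀ i : Fin ℓ, ∀ x ∈ X, ∀ y ∈ X, (∀ j : Fin ℓ, j ≤ i → x j = y j) → f x i = f y i) ∧
  (∀ i : Fin ℓ, ∀ x ∈ X, ∀ y ∈ X, (∀ j : Fin ℓ, j < i → x j = y j) → x i < y i → f x i < f y i)

/-- A morphism of forts: surjective, precellular, maps integer cells into integer cells, and
is continuous on each integer cell. -/
def Morphism {ℓ : ℕ} (F G : Set (Fin ℓ → ℝ)) (φ : (Fin ℓ → ℝ) → (Fin ℓ → ℝ)) : Prop :=
  φ '' F = G ∧ Precellular F φ ∧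
    ∀ C ∈ cellsOf F, (∃ C₂ ∈ cellsOf G, φ '' C ⊆ C₂) ∧ ContinuousOn φ C

/-- Two morphisms are combinatorially equivalent if they map each integer cell of the source
into the same integer cell of the target. -/
def CombEquiv {ℓ : ℕ} (F G : Set (Fin ℓ → ℝ)) (φ ψ : (Fin ℓ → ℝ) → (Fin ℓ → ℝ)) : Prop :=
  ∀ C ∈ cellsOf F, ∃ C₂ ∈ cellsOf G, φ '' C ⊆ C₂ ∧ ψ '' C ⊆ C₂

/-- Projection to the first `i` coordinates. -/
def proj {ℓ : ℕ} (i : ℕ) (h : i ≤ ℓ) (x : Fin ℓ → ℝ) : Fin i → ℝ :=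
  fun j => x (Fin.castLE h j)

/-- The last `ℓ - i` coordinates. -/
def tailpart {ℓ i : ℕ} (h : i ≤ ℓ) (x : Fin ℓ → ℝ) : Fin (ℓ - i) → ℝ :=
  fun j => x ⟨i + (j : ℕ), by have := j.2; omega⟩

/-- Glue a prefix of length `i` with a suffix of length `ℓ - i`. -/
def glue {ℓ i : ℕ} (h : i ≤ ℓ) (x : Fin i → ℝ) (y : Fin (ℓ - i) → ℝ) : Fin ℓ → ℝ :=
  fun j => if hj : (j : ℕ) < i then x ⟨(j : ℕ), hj⟩
    else y ⟨(j : ℕ) - i, by have := j.2; omega⟩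

/-- The fiber `X_x = {y : (x, y) ∈ X}` of `X ⊆ ℝ^ℓ` over `x ∈ ℝ^i`. -/
def fiber {ℓ i : ℕ} (h : i ≤ ℓ) (X : Set (Fin ℓ → ℝ)) (x : Fin i → ℝ) :
    Set (Fin (ℓ - i) → ℝ) :=
  {y | glue h x y ∈ X}

end Forts

namespace Forts

/-- Definition of forts along the first coordinate (`ℱ¹ ⋉ s`), class `A(ℓ)`. -/
inductive FortA : (ℓ : ℕ) → Set (Fin ℓ → ℝ) → Prop
  | base (n : ℕ) (hn : 0 < n) : FortA 1 {x : Fin 1 → ℝ | x 0 ∈ Set.Ioo (0 : ℝ) (n : ℝ)}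
  | step {ℓ : ℕ} (F1 : Set (Fin 1 → ℝ)) (s : Set (Fin 1 → ℝ) → Set (Fin ℓ → ℝ))
      (hF1 : FortA 1 F1) (hs : ∀ C ∈ cellsOf F1, FortA ℓ (s C)) :
      FortA (ℓ + 1)
        {x : Fin (ℓ + 1) → ℝ | ∃ C ∈ cellsOf F1, (fun _ : Fin 1 => x 0) ∈ C ∧ Fin.tail x ∈ s C}

/-- Definition of forts along the last coordinate (`𝒢 ⊙ φ`), class `B(ℓ)`. -/
inductive FortB : (ℓ : ℕ) → Set (Fin ℓ → ℝ) → Prop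
  | base (n : ℕ) (hn : 0 < n) : FortB 1 {x : Fin 1 → ℝ | x 0 ∈ Set.Ioo (0 : ℝ) (n : ℝ)}
  | step {ℓ : ℕ} (G : Set (Fin ℓ → ℝ)) (φ : (Fin ℓ → ℝ) → ℕ)
      (hG : FortB ℓ G) (hφ : ∀ x ∈ G, 1 ≤ φ x)
      (hconst : ∀ C ∈ cellsOf G, ∀ x ∈ C, ∀ y ∈ C, φ x = φ y) :
      FortB (ℓ + 1)
        {x : Fin (ℓ + 1) → ℝ | Fin.init x ∈ G ∧ 0 < x (Fin.last ℓ) ∧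
          x (Fin.last ℓ) < (φ (Fin.init x) : ℝ)}

/-!
Both classes start from the intervals `(0, n)`, and each is closed under the other's
construction, so the theorem follows by induction on `ℓ`.  If every `s C` is `𝒢_C ⊙ φ_C`, then
`ℱ¹ ⋉ s = (ℱ¹ ⋉ 𝒢) ⊙ Φ` with `Φ (x, y) = φ_{C(x)} y`; if `𝒢 = ℱ¹ ⋉ t`, then
`𝒢 ⊙ φ = ℱ¹ ⋉ (C ↦ t C ⊙ φ (a_C, ·))` for any point `a_C` of `C`, since `φ` is constant on cells.
The cell bookkeeping is done through the cell of a point: two reals lie in the same integer cell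
iff they have the same floor and the same ceiling.
-/

section

variable {ℓ : ℕ}

def cell1At (p : ℝ) : Set ℝ :=
  {q | ⌊q⌋ = ⌊p⌋ ∧ ⌈q⌉ = ⌈p⌉}

lemma mem_cell1At_self (p : ℝ) : p ∈ cell1At p := ⟨rfl, rfl⟩

lemma Cell1.eq_cell1At {S : Set ℝ} {p : ℝ} (hS : Cell1 S) (hp : p ∈ S) : S = cell1At p := by
  obtain ⟨k, rfl | rfl⟩ := hS
  · rw [mem_singleton_iff.1 hp]
    ext q
    simp only [mem_singleton_iff, cell1At, mem_ofPred_eq, Int.floor_intCast, Int.ceil_intCast]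
    refine ⟨by rintro rfl; simp, fun ⟨hf, hc⟩ => le_antisymm ?_ ?_⟩
    · exact_mod_cast hc ▸ Int.le_ceil q
    · exact_mod_cast hf ▸ Int.floor_le q
  · have hf : ⌊p⌋ = k := Int.floor_eq_iff.2 ⟨hp.1.le, hp.2⟩
    have hc : ⌈p⌉ = k + 1 :=
      Int.ceil_eq_iff.2 ⟨by push_cast; linarith [hp.1], by push_cast; exact hp.2.le⟩
    ext q
    simp only [cell1At, mem_ofPred_eq, hf, hc, Int.floor_eq_iff, Int.ceil_eq_iff, mem_Ioo]
    push_cast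
    constructor
    · rintro ⟨h1, h2⟩; exact ⟨⟨h1.le, h2⟩, by linarith, h2.le⟩
    · rintro ⟨⟨-, h2⟩, h1, -⟩; exact ⟨by linarith, h2⟩

lemma cell1_cell1At (p : ℝ) : Cell1 (cell1At p) := by
  obtain ⟨S, hS, hp⟩ : ∃ S, Cell1 S ∧ p ∈ S := by
    by_cases h : p = ⌊p⌋
    · exact ⟨{p}, ⟨⌊p⌋, .inl (by rw [← h])⟩, rfl⟩
    · exact ⟨_, ⟨⌊p⌋, .inr rfl⟩, lt_of_le_of_ne (Int.floor_le p) (Ne.symm h),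
        Int.lt_floor_add_one p⟩
  exact hS.eq_cell1At hp ▸ hS

lemma Cell1.nonempty {S : Set ℝ} (hS : Cell1 S) : S.Nonempty := by
  obtain ⟨k, rfl | rfl⟩ := hS
  · exact singleton_nonempty _
  · exact nonempty_Ioo.2 (lt_add_one _)

lemma cell1At_subset_Ioo {p : ℝ} {a b : ℤ} (hp : p ∈ Ioo (a : ℝ) b) :
    cell1At p ⊆ Ioo (a : ℝ) b := by
  rintro q ⟨hf, hc⟩
  have ha : a < ⌈q⌉ := hc ▸ Int.lt_ceil.2 hp.1
  have hb : ⌊q⌋ < b := hf ▸ Int.floor_lt.2 hp.2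
  exact ⟨Int.lt_ceil.1 ha, Int.floor_lt.1 hb⟩

def cellAt (x : Fin ℓ → ℝ) : Set (Fin ℓ → ℝ) :=
  {y | ∀ i, y i ∈ cell1At (x i)}

lemma mem_cellAt_self (x : Fin ℓ → ℝ) : x ∈ cellAt x := fun i => mem_cell1At_self (x i)

lemma cell_cellAt (x : Fin ℓ → ℝ) : Cell (cellAt x) :=
  ⟨_, fun i => cell1_cell1At (x i), rfl⟩

lemma Cell.eq_cellAt {S : Set (Fin ℓ → ℝ)} {x : Fin ℓ → ℝ} (hS : Cell S) (hx : x ∈ S) :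
    S = cellAt x := by
  obtain ⟨c, hc, rfl⟩ := hS
  ext y
  exact forall_congr' fun i => by rw [(hc i).eq_cell1At (hx i)]

lemma Cell.nonempty {S : Set (Fin ℓ → ℝ)} (hS : Cell S) : S.Nonempty := by
  obtain ⟨c, hc, rfl⟩ := hS
  exact ⟨fun i => (hc i).nonempty.some, fun i => (hc i).nonempty.some_mem⟩

lemma cellAt_eq_of_mem {x y : Fin ℓ → ℝ} (h : y ∈ cellAt x) : cellAt y = cellAt x :=
  ((cell_cellAt x).eq_cellAt h).symm

lemma mem_cellAt_one {x y : Fin 1 → ℝ} : y ∈ cellAt x ↔ y 0 ∈ cell1At (x 0) :=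
  Fin.forall_fin_one

lemma mem_cellAt_succ {x y : Fin (ℓ + 1) → ℝ} :
    y ∈ cellAt x ↔ y 0 ∈ cell1At (x 0) ∧ Fin.tail y ∈ cellAt (Fin.tail x) :=
  Fin.forall_fin_succ

def IsCellular (S : Set (Fin ℓ → ℝ)) : Prop :=
  ∀ x ∈ S, cellAt x ⊆ S

lemma constOnCells_iff {G : Set (Fin ℓ → ℝ)} {φ : (Fin ℓ → ℝ) → ℕ} :
    (∀ C ∈ cellsOf G, ∀ x ∈ C, ∀ y ∈ C, φ x = φ y) ↔
      ∀ x, cellAt x ⊆ G → ∀ y ∈ cellAt x, φ y = φ x := by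
  refine ⟨fun h x hx y hy => (h _ ⟨cell_cellAt x, hx⟩ x (mem_cellAt_self x) y hy).symm, ?_⟩
  rintro h C ⟨hC, hCG⟩ x hx y hy
  rw [hC.eq_cellAt hx] at hCG hy
  exact (h x hCG y hy).symm

/-- `cellProd ℱ¹ s` is the paper's `ℱ¹ ⋉ s`, and `underGraph 𝒢 φ` is `𝒢 ⊙ φ`. -/
def cellProd (F1 : Set (Fin 1 → ℝ)) (s : Set (Fin 1 → ℝ) → Set (Fin ℓ → ℝ)) :
    Set (Fin (ℓ + 1) → ℝ) :=
  {x | ∃ C ∈ cellsOf F1, (fun _ : Fin 1 => x 0) ∈ C ∧ Fin.tail x ∈ s C}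

def underGraph (G : Set (Fin ℓ → ℝ)) (φ : (Fin ℓ → ℝ) → ℕ) : Set (Fin (ℓ + 1) → ℝ) :=
  {x | Fin.init x ∈ G ∧ 0 < x (Fin.last ℓ) ∧ x (Fin.last ℓ) < (φ (Fin.init x) : ℝ)}

def baseFort (n : ℕ) : Set (Fin 1 → ℝ) :=
  {x | x 0 ∈ Ioo (0 : ℝ) (n : ℝ)}

lemma isCellular_baseFort (n : ℕ) : IsCellular (baseFort n) := by
  intro x hx y hy
  have hx' : x 0 ∈ Ioo ((0 : ℤ) : ℝ) ((n : ℤ) : ℝ) := by simpa [baseFort] using hx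
  simpa [baseFort] using cell1At_subset_Ioo hx' (mem_cellAt_one.1 hy)

lemma mem_cellProd {F1 : Set (Fin 1 → ℝ)} (hF1 : IsCellular F1)
    {s : Set (Fin 1 → ℝ) → Set (Fin ℓ → ℝ)} {x : Fin (ℓ + 1) → ℝ} :
    x ∈ cellProd F1 s ↔
      (fun _ : Fin 1 => x 0) ∈ F1 ∧ Fin.tail x ∈ s (cellAt fun _ : Fin 1 => x 0) := by
  constructor
  · rintro ⟨C, ⟨hC, hCF⟩, hx0, hxs⟩
    rw [hC.eq_cellAt hx0] at hxs
    exact ⟨hCF hx0, hxs⟩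
  · rintro ⟨hx0, hxs⟩
    exact ⟨_, ⟨cell_cellAt _, hF1 _ hx0⟩, mem_cellAt_self _, hxs⟩

lemma cons_mem_cellProd {F1 : Set (Fin 1 → ℝ)} {s : Set (Fin 1 → ℝ) → Set (Fin ℓ → ℝ)}
    {C : Set (Fin 1 → ℝ)} (hC : C ∈ cellsOf F1) {a : ℝ} (ha : (fun _ : Fin 1 => a) ∈ C)
    {y : Fin ℓ → ℝ} (hy : y ∈ s C) : Fin.cons a y ∈ cellProd F1 s :=
  ⟨C, hC, ha, hy⟩

lemma isCellular_cellProd {F1 : Set (Fin 1 → ℝ)} {s : Set (Fin 1 → ℝ) → Set (Fin ℓ → ℝ)}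
    (hs : ∀ C ∈ cellsOf F1, IsCellular (s C)) : IsCellular (cellProd F1 s) := by
  rintro x ⟨C, hC, hx0, hxs⟩ y hy
  rw [mem_cellAt_succ] at hy
  refine ⟨C, hC, ?_, hs C hC _ hxs hy.2⟩
  rw [hC.1.eq_cellAt hx0]
  exact mem_cellAt_one.2 hy.1

lemma init_eq_const_zero (x : Fin 2 → ℝ) : Fin.init x = fun _ => x 0 :=
  funext fun i => by fin_cases i; rfl

lemma FortA.isCellular {S : Set (Fin ℓ → ℝ)} (h : FortA ℓ S) : IsCellular S := by
  induction h with
  | base n _ => exact isCellular_baseFort n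
  | step F1 s _ _ _ ihs => exact isCellular_cellProd ihs

lemma FortA.nonempty {S : Set (Fin ℓ → ℝ)} (h : FortA ℓ S) : S.Nonempty := by
  induction h with
  | base n hn =>
    have : (1 : ℝ) ≤ n := Nat.one_le_cast.2 hn
    exact ⟨fun _ => 1 / 2, by norm_num, by linarith⟩
  | step F1 s hF1 _ ihF1 ihs =>
    obtain ⟨z, hz⟩ := ihF1
    have hC : cellAt z ∈ cellsOf F1 := ⟨cell_cellAt z, hF1.isCellular z hz⟩
    obtain ⟨y, hy⟩ := ihs _ hC
    exact ⟨_, cons_mem_cellProd hC (mem_cellAt_one.2 (mem_cell1At_self (z 0))) hy⟩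

lemma fortA_one_iff {S : Set (Fin 1 → ℝ)} : FortA 1 S ↔ ∃ n, 0 < n ∧ S = baseFort n := by
  refine ⟨fun h => ?_, fun ⟨n, hn, hS⟩ => hS ▸ .base n hn⟩
  cases h with
  | base n hn => exact ⟨n, hn, rfl⟩
  | step F1 s hF1 hs =>
    obtain ⟨z, hz⟩ := hF1.nonempty
    nomatch hs _ ⟨cell_cellAt z, hF1.isCellular z hz⟩

lemma fortB_one_iff {S : Set (Fin 1 → ℝ)} : FortB 1 S ↔ ∃ n, 0 < n ∧ S = baseFort n := by
  refine ⟨fun h => ?_, fun ⟨n, hn, hS⟩ => hS ▸ .base n hn⟩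
  cases h with
  | base n hn => exact ⟨n, hn, rfl⟩
  | step G φ hG => nomatch hG

lemma fortA_succ_iff (hℓ : 1 ≤ ℓ) {S : Set (Fin (ℓ + 1) → ℝ)} :
    FortA (ℓ + 1) S ↔ ∃ N, 0 < N ∧ ∃ s : Set (Fin 1 → ℝ) → Set (Fin ℓ → ℝ),
      (∀ C ∈ cellsOf (baseFort N), FortA ℓ (s C)) ∧ S = cellProd (baseFort N) s := by
  refine ⟨fun h => ?_, fun ⟨N, hN, s, hs, hS⟩ => hS ▸ .step _ s (.base N hN) hs⟩
  cases h with
  | base => omega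
  | step F1 s hF1 hs =>
    obtain ⟨N, hN, rfl⟩ := fortA_one_iff.1 hF1
    exact ⟨N, hN, s, hs, rfl⟩

lemma fortB_succ_iff (hℓ : 1 ≤ ℓ) {S : Set (Fin (ℓ + 1) → ℝ)} :
    FortB (ℓ + 1) S ↔ ∃ (G : Set (Fin ℓ → ℝ)) (φ : (Fin ℓ → ℝ) → ℕ), FortB ℓ G ∧
      (∀ x ∈ G, 1 ≤ φ x) ∧ (∀ C ∈ cellsOf G, ∀ x ∈ C, ∀ y ∈ C, φ x = φ y) ∧
      S = underGraph G φ := by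
  refine ⟨fun h => ?_, fun ⟨G, φ, hG, hφ, hconst, hS⟩ => hS ▸ .step G φ hG hφ hconst⟩
  cases h with
  | base => omega
  | step G φ hG hφ hconst => exact ⟨G, φ, hG, hφ, hconst, rfl⟩

lemma fortB_cellProd (hℓ : 1 ≤ ℓ) {N : ℕ} (hN : 0 < N)
    {s : Set (Fin 1 → ℝ) → Set (Fin ℓ → ℝ)} (hs : ∀ C ∈ cellsOf (baseFort N), FortB ℓ (s C)) :
    FortB (ℓ + 1) (cellProd (baseFort N) s) := by
  have hcell : ∀ z ∈ baseFort N, cellAt z ∈ cellsOf (baseFort N) :=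
    fun z hz => ⟨cell_cellAt z, isCellular_baseFort N z hz⟩
  induction ℓ, hℓ using Nat.le_induction with
  | base =>
    choose! n hn hsn using fun C hC => fortB_one_iff.1 (hs C hC)
    have hset : cellProd (baseFort N) s = underGraph (baseFort N) (fun z => n (cellAt z)) := by
      ext x
      rw [mem_cellProd (isCellular_baseFort N)]
      simp only [underGraph, mem_ofPred_eq, init_eq_const_zero]
      exact and_congr_right fun hx0 => by rw [hsn _ (hcell _ hx0)]; rfl
    rw [hset]
    exact .step _ _ (.base N hN) (fun z hz => hn _ (hcell z hz))
      (constOnCells_iff.2 fun x _ y hy => by rw [cellAt_eq_of_mem hy])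
  | succ m hm ih =>
    choose! G φ hG hφ hconst hsG using fun C hC => (fortB_succ_iff hm).1 (hs C hC)
    let Φ : (Fin (m + 1) → ℝ) → ℕ := fun y => φ (cellAt fun _ : Fin 1 => y 0) (Fin.tail y)
    have hset : cellProd (baseFort N) s = underGraph (cellProd (baseFort N) G) Φ := by
      ext x
      have hinit : Fin.init x 0 = x 0 := rfl
      rw [mem_cellProd (isCellular_baseFort N)]
      simp only [underGraph, mem_ofPred_eq, mem_cellProd (isCellular_baseFort N), hinit,
        and_assoc]
      refine and_congr_right fun hx0 => ?_
      rw [hsG _ (hcell _ hx0)]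
      exact Iff.rfl
    rw [hset]
    refine .step _ Φ (ih hG) (fun y hy => ?_) (constOnCells_iff.2 fun x hx y hy => ?_)
    · rw [mem_cellProd (isCellular_baseFort N)] at hy
      exact hφ _ (hcell _ hy.1) _ hy.2
    · have hx' := (mem_cellProd (isCellular_baseFort N)).1 (hx (mem_cellAt_self x))
      rw [mem_cellAt_succ] at hy
      have hhead : cellAt (fun _ : Fin 1 => y 0) = cellAt fun _ : Fin 1 => x 0 :=
        cellAt_eq_of_mem (mem_cellAt_one.2 hy.1)
      have htail : cellAt (Fin.tail x) ⊆ G (cellAt fun _ : Fin 1 => x 0) := fun z hz => by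
        simpa using ((mem_cellProd (isCellular_baseFort N)).1
          (hx (mem_cellAt_succ (y := Fin.cons (x 0) z) |>.2
            ⟨mem_cell1At_self (x 0), by simpa using hz⟩))).2
      simp only [Φ, hhead]
      exact constOnCells_iff.1 (hconst _ (hcell _ hx'.1)) _ htail _ hy.2

lemma fortA_underGraph (hℓ : 1 ≤ ℓ) {G : Set (Fin ℓ → ℝ)} {φ : (Fin ℓ → ℝ) → ℕ}
    (hG : FortA ℓ G) (hφ : ∀ x ∈ G, 1 ≤ φ x)
    (hconst : ∀ C ∈ cellsOf G, ∀ x ∈ C, ∀ y ∈ C, φ x = φ y) :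
    FortA (ℓ + 1) (underGraph G φ) := by
  rw [constOnCells_iff] at hconst
  have hpoint : ∀ C : Set (Fin 1 → ℝ), Cell C → ∃ a : ℝ, (fun _ : Fin 1 => a) ∈ C := by
    intro C hC
    obtain ⟨z, hz⟩ := hC.nonempty
    exact ⟨z 0, by convert hz using 1; funext i; rw [Fin.fin_one_eq_zero i]⟩
  choose! a ha using hpoint
  have ha' : ∀ x : Fin 1 → ℝ, a (cellAt x) ∈ cell1At (x 0) :=
    fun x => mem_cellAt_one.1 (ha _ (cell_cellAt x))
  induction ℓ, hℓ using Nat.le_induction with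
  | base =>
    obtain ⟨N, hN, rfl⟩ := fortA_one_iff.1 hG
    have hset : underGraph (baseFort N) φ =
        cellProd (baseFort N) (fun C => baseFort (φ fun _ => a C)) := by
      ext x
      rw [mem_cellProd (isCellular_baseFort N)]
      simp only [underGraph, mem_ofPred_eq, init_eq_const_zero]
      refine and_congr_right fun hx0 => ?_
      rw [hconst _ (isCellular_baseFort N _ hx0) (fun _ => a (cellAt fun _ => x 0))
        (mem_cellAt_one.2 (ha' _))]
      exact Iff.rfl
    rw [hset]
    exact .step _ _ (.base N hN) fun C hC => .base _ (hφ _ (hC.2 (ha C hC.1)))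
  | succ m hm ih =>
    obtain ⟨N, hN, t, ht, rfl⟩ := (fortA_succ_iff hm).1 hG
    let s C := underGraph (t C) fun y => φ (Fin.cons (a C) y)
    have hset : underGraph (cellProd (baseFort N) t) φ = cellProd (baseFort N) s := by
      ext x
      have hinit : Fin.init x 0 = x 0 := rfl
      rw [mem_cellProd (isCellular_baseFort N)]
      simp only [underGraph, mem_ofPred_eq, mem_cellProd (isCellular_baseFort N), hinit,
        and_assoc]
      refine and_congr_right fun hx0 => and_congr_right fun hxt => ?_
      have hxG : Fin.init x ∈ cellProd (baseFort N) t :=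
        (mem_cellProd (isCellular_baseFort N)).2 ⟨hx0, hxt⟩
      rw [← hconst _ (hG.isCellular _ hxG)
        (Fin.cons (a (cellAt fun _ => x 0)) (Fin.tail (Fin.init x)))
        (mem_cellAt_succ.2 ⟨ha' _, by simpa using mem_cellAt_self _⟩)]
      exact Iff.rfl
    rw [hset]
    refine .step _ s (.base N hN) fun C hC => ih (ht C hC)
      (fun y hy => hφ _ (cons_mem_cellProd hC (ha C hC.1) hy)) fun y hy y' hy' => ?_
    refine hconst _ (fun z hz => ?_) _
      (mem_cellAt_succ.2 ⟨by simpa using mem_cell1At_self _, by simpa using hy'⟩)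
    rw [mem_cellAt_succ] at hz
    rw [← Fin.cons_self_tail z]
    refine cons_mem_cellProd hC ?_ (hy (by simpa using hz.2))
    rw [hC.1.eq_cellAt (ha C hC.1)]
    exact mem_cellAt_one.2 (by simpa using hz.1)

end

/-- The two inductive definitions of forts coincide: `A(ℓ) = B(ℓ)` for every `ℓ ≥ 1`. -/
theorem fortA_eq_fortB :
    ∀ ℓ : ℕ, 1 ≤ ℓ → ∀ S : Set (Fin ℓ → ℝ), FortA ℓ S ↔ FortB ℓ S := by
  intro ℓ hℓ
  induction ℓ, hℓ using Nat.le_induction with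
  | base => exact fun S => fortA_one_iff.trans fortB_one_iff.symm
  | succ n hn ih =>
    refine fun S => ⟨fun h => ?_, fun h => ?_⟩
    · obtain ⟨N, hN, s, hs, rfl⟩ := (fortA_succ_iff hn).1 h
      exact fortB_cellProd hn hN fun C hC => (ih _).1 (hs C hC)
    · obtain ⟨G, φ, hG, hφ, hconst, rfl⟩ := (fortB_succ_iff hn).1 h
      exact fortA_underGraph hn ((ih G).2 hG) hφ hconst

end Forts
end

section
/- Every morphism of forts φ: ℱ→𝒢 (forts of length ℓ) is injective. Moreover, for every 1≤i≤ℓ and every fixed (x_1,…,x_{i−1})∈π_{i−1}(ℱ), the function t↦φ_i(x_1,…,x_{i−1},t) is continuous on its domain {t∈ℝ : (x_1,…,x_{i−1},t)∈π_i(ℱ)}. -/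
open Set

/-!
A precellular map is injective: if `f x = f y` but `x ≠ y`, then at the first coordinate `i` where
they differ, strict monotonicity in `x_i` forces `f x i ≠ f y i`.

For continuity, fix the first `i - 1` coordinates of `x ∈ ℱ`. The `i`-th coordinate of `φ` then
factors through a function `g` of `t = x_i`, which is strictly increasing on the slice
`{t : (x_1, …, x_{i-1}, t) ∈ π_i(ℱ)}`. Slices of forts are open, by induction on the fort: at
the first coordinate the slice is `(0, n)`, at later ones a union of slices of the forts stacked
over the cells of the first coordinate.
Since `φ` is surjective and precellular, `g` maps the slice of `ℱ` at `x` onto the slice of `𝒢`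
at `φ x`, which is open as well; a strictly increasing function on an open set of `ℝ` whose
image is open is continuous.
-/

namespace Forts

/-- The fiber of `π_i(X)` over `π_{i-1}(p)`, with `i` indexed from `0`. -/
def slice {ℓ : ℕ} (X : Set (Fin ℓ → ℝ)) (i : Fin ℓ) (p : Fin ℓ → ℝ) : Set ℝ :=
  {t | ∃ z ∈ X, (∀ j : Fin ℓ, j < i → z j = p j) ∧ z i = t}

lemma exists_cell1_mem_subset_Ioo {a b : ℤ} {t : ℝ} (ht : t ∈ Ioo (a : ℝ) b) :
    ∃ c, Cell1 c ∧ t ∈ c ∧ c ⊆ Ioo (a : ℝ) b := by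
  by_cases hint : (⌊t⌋ : ℝ) = t
  · exact ⟨{t}, ⟨⌊t⌋, Or.inl (by rw [hint])⟩, rfl, singleton_subset_iff.2 ht⟩
  · have ha : a ≤ ⌊t⌋ := Int.le_floor.2 ht.1.le
    have hb : ⌊t⌋ + 1 ≤ b := Int.floor_lt.2 ht.2
    refine ⟨Ioo (⌊t⌋ : ℝ) (⌊t⌋ + 1), ⟨⌊t⌋, Or.inr rfl⟩,
      ⟨(Int.floor_le t).lt_of_ne hint, Int.lt_floor_add_one t⟩, fun y hy => ⟨?_, ?_⟩⟩
    · exact lt_of_le_of_lt (by exact_mod_cast ha) hy.1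
    · exact hy.2.trans_le (by exact_mod_cast hb)

lemma Cell.cons {ℓ : ℕ} {C : Set (Fin 1 → ℝ)} {C' : Set (Fin ℓ → ℝ)} (hC : Cell C)
    (hC' : Cell C') : Cell {x : Fin (ℓ + 1) → ℝ | (fun _ => x 0) ∈ C ∧ Fin.tail x ∈ C'} := by
  obtain ⟨c, hc, rfl⟩ := hC
  obtain ⟨c', hc', rfl⟩ := hC'
  refine ⟨Fin.cons (c 0) c', Fin.cases (hc 0) hc', ?_⟩
  ext x
  simp [Fin.forall_fin_succ, Fin.tail]

namespace Fort

variable {ℓ : ℕ} {F : Set (Fin ℓ → ℝ)}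

lemma exists_cell_mem (hF : Fort ℓ F) {x : Fin ℓ → ℝ} (hx : x ∈ F) :
    ∃ C ∈ cellsOf F, x ∈ C := by
  induction hF with
  | base n _ =>
    obtain ⟨c, hc, hxc, hcF⟩ := exists_cell1_mem_subset_Ioo (a := 0) (b := n) (by simpa using hx)
    refine ⟨{y | ∀ j, y j ∈ c}, ⟨⟨fun _ => c, fun _ => hc, rfl⟩, fun y hy => ?_⟩, ?_⟩
    · simpa using hcF (hy 0)
    · simpa [Fin.forall_fin_one] using hxc
  | step F1 s _ _ _ ihs =>
    obtain ⟨C, hC, hx0, hxs⟩ := hx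
    obtain ⟨C', hC', hxC'⟩ := ihs C hC hxs
    exact ⟨_, ⟨hC.1.cons hC'.1, fun y hy => ⟨C, hC, hy.1, hC'.2 hy.2⟩⟩, hx0, hxC'⟩

lemma nonempty (hF : Fort ℓ F) : F.Nonempty := by
  induction hF with
  | base n hn =>
    have hn : (1 : ℝ) ≤ n := by exact_mod_cast hn
    exact ⟨fun _ => 1 / 2, by norm_num, by linarith⟩
  | step F1 s hF1 _ ih1 ihs =>
    obtain ⟨x, hx⟩ := ih1
    obtain ⟨C, hC, hxC⟩ := hF1.exists_cell_mem hx
    obtain ⟨y, hy⟩ := ihs C hC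
    refine ⟨Fin.cons (x 0) y, C, hC, ?_, by simpa using hy⟩
    simpa [funext fun j => congrArg x (Subsingleton.elim 0 j)] using hxC

lemma isOpen_slice (hF : Fort ℓ F) (i : Fin ℓ) (p : Fin ℓ → ℝ) : IsOpen (slice F i p) := by
  induction hF with
  | base n _ =>
    convert isOpen_Ioo (a := (0 : ℝ)) (b := n)
    ext t
    constructor
    · rintro ⟨z, hz, -, rfl⟩
      rwa [Subsingleton.elim i 0]
    · exact fun ht =>
        ⟨fun _ => t, ht, fun j hj => (lt_irrefl i (Subsingleton.elim j i ▸ hj)).elim, rfl⟩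
  | step F1 s hF1 hs ih1 ihs =>
    cases i using Fin.cases with
    | zero =>
      convert ih1 0 (fun _ => p 0) using 1
      ext t
      constructor
      · rintro ⟨w, ⟨C, hC, hw0, -⟩, -, rfl⟩
        exact ⟨_, hC.2 hw0, fun j hj => absurd hj (Fin.not_lt_zero j), rfl⟩
      · rintro ⟨z, hz, -, rfl⟩
        obtain ⟨C, hC, hzC⟩ := hF1.exists_cell_mem hz
        obtain ⟨y, hy⟩ := (hs C hC).nonempty
        refine ⟨Fin.cons (z 0) y, ⟨C, hC, ?_, by simpa using hy⟩,
          fun j hj => absurd hj (Fin.not_lt_zero j), by simp⟩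
        simpa [funext fun j => congrArg z (Subsingleton.elim 0 j)] using hzC
    | succ i =>
      convert isOpen_biUnion fun C (hC : C ∈ {C ∈ cellsOf F1 | (fun _ => p 0) ∈ C}) =>
        ihs C hC.1 i (Fin.tail p) using 1
      ext t
      simp only [mem_iUnion]
      constructor
      · rintro ⟨w, ⟨C, hC, hw0, hws⟩, hwp, rfl⟩
        have h0 : w 0 = p 0 := hwp 0 (Fin.succ_pos i)
        exact ⟨C, ⟨hC, h0 ▸ hw0⟩, Fin.tail w, hws,
          fun j hj => hwp j.succ (Fin.succ_lt_succ_iff.2 hj), rfl⟩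
      · rintro ⟨C, ⟨hC, hpC⟩, y, hy, hyp, rfl⟩
        refine ⟨Fin.cons (p 0) y, ⟨C, hC, by simpa using hpC, by simpa using hy⟩,
          fun j hj => ?_, by simp⟩
        cases j using Fin.cases with
        | zero => simp
        | succ j => simpa [Fin.tail] using hyp j (Fin.succ_lt_succ_iff.1 hj)

end Fort

namespace Precellular

variable {ℓ : ℕ} {X : Set (Fin ℓ → ℝ)} {f : (Fin ℓ → ℝ) → (Fin ℓ → ℝ)}

lemma eq_of_apply_eq (h : Precellular X f) {x y : Fin ℓ → ℝ} (hx : x ∈ X) (hy : y ∈ X)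
    (i : Fin ℓ) (hxy : ∀ j ≤ i, f x j = f y j) : x i = y i := by
  induction i using WellFoundedLT.induction with
  | ind i ih =>
    have hpre : ∀ j < i, x j = y j := fun j hj => ih j hj fun k hk => hxy k (hk.trans hj.le)
    refine le_antisymm (not_lt.1 fun hlt => ?_) (not_lt.1 fun hlt => ?_)
    · exact (h.2 i y hy x hx (fun j hj => (hpre j hj).symm) hlt).ne' (hxy i le_rfl)
    · exact (h.2 i x hx y hy hpre hlt).ne (hxy i le_rfl)

lemma injOn (h : Precellular X f) : InjOn f X :=
  fun _ hx _ hy hxy => funext fun i => h.eq_of_apply_eq hx hy i fun j _ => by rw [hxy]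

lemma exists_coord_factorization (h : Precellular X f) (i : Fin ℓ) (p : Fin ℓ → ℝ) :
    ∃ g : ℝ → ℝ, ∀ z ∈ X, (∀ j < i, z j = p j) → g (z i) = f z i := by
  let S := {z // z ∈ X ∧ ∀ j < i, z j = p j}
  have hfactor : Function.FactorsThrough (fun z : S => f z.1 i) (fun z : S => z.1 i) := by
    refine fun z w hzw => h.1 i z.1 z.2.1 w.1 w.2.1 fun j hj => ?_
    rcases hj.lt_or_eq with hj | rfl
    · rw [z.2.2 j hj, w.2.2 j hj]
    · exact hzw
  exact ⟨Function.extend _ _ 0, fun z hz hzp => hfactor.extend_apply 0 ⟨z, hz, hzp⟩⟩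

variable {i : Fin ℓ} {p : Fin ℓ → ℝ} {g : ℝ → ℝ}

lemma strictMonoOn_slice (h : Precellular X f)
    (hg : ∀ z ∈ X, (∀ j < i, z j = p j) → g (z i) = f z i) : StrictMonoOn g (slice X i p) := by
  rintro _ ⟨z, hz, hzp, rfl⟩ _ ⟨w, hw, hwp, rfl⟩ hzw
  rw [hg z hz hzp, hg w hw hwp]
  exact h.2 i z hz w hw (fun j hj => (hzp j hj).trans (hwp j hj).symm) hzw

lemma image_slice (h : Precellular X f) (hp : p ∈ X)
    (hg : ∀ z ∈ X, (∀ j < i, z j = p j) → g (z i) = f z i) :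
    g '' slice X i p = slice (f '' X) i (f p) := by
  have hprefix : ∀ z ∈ X, (∀ j < i, z j = p j) → ∀ j < i, f z j = f p j :=
    fun z hz hzp j hj => h.1 j z hz p hp fun k hk => hzp k (hk.trans_lt hj)
  ext t
  constructor
  · rintro ⟨_, ⟨z, hz, hzp, rfl⟩, rfl⟩
    exact ⟨f z, mem_image_of_mem f hz, hprefix z hz hzp, (hg z hz hzp).symm⟩
  · rintro ⟨_, ⟨z, hz, rfl⟩, hzp, rfl⟩
    have hzp' : ∀ j < i, z j = p j := fun j hj =>
      h.eq_of_apply_eq hz hp j fun k hk => hzp k (hk.trans_lt hj)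
    exact ⟨z i, ⟨z, hz, hzp', rfl⟩, hg z hz hzp'⟩

end Precellular

lemma _root_.StrictMonoOn.continuousOn_of_isOpen_image {α β : Type*} [LinearOrder α]
    [TopologicalSpace α] [OrderTopology α] [LinearOrder β] [TopologicalSpace β] [OrderTopology β]
    [DenselyOrdered β] {g : α → β} {s : Set α} (hg : StrictMonoOn g s) (hs : IsOpen s)
    (hgs : IsOpen (g '' s)) : ContinuousOn g s :=
  fun _ ha => (hg.continuousAt_of_image_mem_nhds (hs.mem_nhds ha)
    (hgs.mem_nhds (mem_image_of_mem g ha))).continuousWithinAt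

/-- Every morphism of forts is injective; moreover each coordinate function, with the
first `i - 1` coordinates fixed, is continuous on its domain
`{t : (x_1, …, x_{i-1}, t) ∈ π_i(ℱ)}`. -/
theorem morphism_injOn_and_fiberwise_continuous {ℓ : ℕ} (F G : Set (Fin ℓ → ℝ))
    (hF : Fort ℓ F) (hG : Fort ℓ G)
    (φ : (Fin ℓ → ℝ) → (Fin ℓ → ℝ)) (hφ : Morphism F G φ) :
    Set.InjOn φ F ∧
      ∀ i : Fin ℓ, ∀ x ∈ F, ∃ g : ℝ → ℝ,
        ContinuousOn g {t : ℝ | ∃ z ∈ F, (∀ j : Fin ℓ, j < i → z j = x j) ∧ z i = t} ∧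
        ∀ z ∈ F, (∀ j : Fin ℓ, j < i → z j = x j) → g (z i) = φ z i := by
  obtain ⟨himage, hpre, -⟩ := hφ
  refine ⟨hpre.injOn, fun i x hx => ?_⟩
  obtain ⟨g, hg⟩ := hpre.exists_coord_factorization i x
  have hgD : g '' slice F i x = slice G i (φ x) := himage ▸ hpre.image_slice hx hg
  have hopen : IsOpen (g '' slice F i x) := hgD ▸ hG.isOpen_slice i (φ x)
  exact ⟨g, (hpre.strictMonoOn_slice hg).continuousOn_of_isOpen_image (hF.isOpen_slice i x) hopen,
    hg⟩

end Forts
end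

section
/- Let ℱ,𝒢 be forts of length ℓ and let {φ_λ: ℱ→𝒢}_{λ∈(0,1)} be a family of morphisms which are pairwise combinatorially equivalent, such that for every integer cell 𝒞∈C(ℱ) the map (λ,x)↦φ_λ(x) is continuous on (0,1)×𝒞. Then the map ψ: (0,1)×ℱ→(0,1)×𝒢 defined by ψ(λ,x)=(λ,φ_λ(x)) is a morphism of forts of length ℓ+1, where (0,1)×ℱ denotes the fort (0,1)⋉s with s assigning the fort ℱ to the unique integer cell of (0,1), and similarly for (0,1)×𝒢. -/
open Set

/-!
Identify `ℝ^(ℓ+1)` with `ℝ × ℝ^ℓ`. Every integer cell of `(0,1) × F` is a product `A × B` of a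
cell `A ⊆ (0,1)` and a cell `B` of `F`. Combinatorial equivalence gives one cell `D` of `G`
with `φ_λ(B) ⊆ D` for all `λ`, so `ψ(A × B) ⊆ A × D`; continuity on `A × B` is the joint
continuity hypothesis, and surjectivity and precellularity are checked fibrewise in `λ`.
-/

namespace Forts

theorem Cell1.nonempty_s4 {A : Set ℝ} (h : Cell1 A) : A.Nonempty := by
  obtain ⟨k, rfl | rfl⟩ := h
  · exact singleton_nonempty _
  · exact nonempty_Ioo.2 (by linarith)

theorem Cell1.eq_of_mem {A B : Set ℝ} (hA : Cell1 A) (hB : Cell1 B) {t : ℝ}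
    (htA : t ∈ A) (htB : t ∈ B) : A = B := by
  have floor_eq {S : Set ℝ} {n : ℤ} (hS : S = {(n : ℝ)} ∨ S = Ioo (n : ℝ) (n + 1))
      (ht : t ∈ S) : ⌊t⌋ = n := by
    rcases hS with rfl | rfl
    · rw [mem_singleton_iff.1 ht, Int.floor_intCast]
    · exact Int.floor_eq_iff.2 ⟨ht.1.le, ht.2⟩
  obtain ⟨k, hk⟩ := hA
  obtain ⟨m, hm⟩ := hB
  obtain rfl : k = m := (floor_eq hk htA).symm.trans (floor_eq hm htB)
  rcases hk with rfl | rfl <;> rcases hm with rfl | rfl <;> simp_all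

theorem Cell.nonempty_s4 {ℓ : ℕ} {A : Set (Fin ℓ → ℝ)} (h : Cell A) : A.Nonempty := by
  obtain ⟨c, hc, rfl⟩ := h
  choose y hy using fun i => (hc i).nonempty_s4
  exact ⟨y, hy⟩

theorem Cell.eq_of_mem {ℓ : ℕ} {A B : Set (Fin ℓ → ℝ)} (hA : Cell A) (hB : Cell B)
    {x : Fin ℓ → ℝ} (hxA : x ∈ A) (hxB : x ∈ B) : A = B := by
  obtain ⟨c, hc, rfl⟩ := hA
  obtain ⟨d, hd, rfl⟩ := hB
  rw [funext fun i => (hc i).eq_of_mem (hd i) (hxA i) (hxB i)]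

section ConsProd

variable {ℓ : ℕ}

def consProd (A : Set ℝ) (B : Set (Fin ℓ → ℝ)) : Set (Fin (ℓ + 1) → ℝ) :=
  {x | x 0 ∈ A ∧ Fin.tail x ∈ B}

theorem consProd_eq_preimage (A : Set ℝ) (B : Set (Fin ℓ → ℝ)) :
    consProd A B = (Fin.consEquiv fun _ => ℝ).symm ⁻¹' A ×ˢ B :=
  rfl

theorem consProd_subset_consProd_iff {A A' : Set ℝ} {B B' : Set (Fin ℓ → ℝ)}
    (hA : A.Nonempty) (hB : B.Nonempty) :
    consProd A B ⊆ consProd A' B' ↔ A ⊆ A' ∧ B ⊆ B' := by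
  rw [consProd_eq_preimage, consProd_eq_preimage,
    (Fin.consEquiv _).symm.surjective.preimage_subset_preimage_iff,
    prod_subset_prod_iff]
  simp [hA.ne_empty, hB.ne_empty]

theorem consProd_mono {A A' : Set ℝ} {B B' : Set (Fin ℓ → ℝ)} (hA : A ⊆ A') (hB : B ⊆ B') :
    consProd A B ⊆ consProd A' B' :=
  fun _ hx => ⟨hA hx.1, hB hx.2⟩

theorem cell_consProd {A : Set ℝ} {B : Set (Fin ℓ → ℝ)} (hA : Cell1 A) (hB : Cell B) :
    Cell (consProd A B) := by
  obtain ⟨c, hc, rfl⟩ := hB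
  refine ⟨Fin.cons A c, Fin.cases hA hc, ?_⟩
  ext x
  simp [consProd, Fin.forall_fin_succ, Fin.tail]

theorem Cell.exists_eq_consProd {C : Set (Fin (ℓ + 1) → ℝ)} (hC : Cell C) :
    ∃ A B, Cell1 A ∧ Cell B ∧ C = consProd A B := by
  obtain ⟨c, hc, rfl⟩ := hC
  refine ⟨c 0, {y | ∀ j, y j ∈ c j.succ}, hc 0, ⟨_, fun j => hc j.succ, rfl⟩, ?_⟩
  ext x
  simp [consProd, Fin.forall_fin_succ, Fin.tail]

end ConsProd

section FamilyMap

variable {ℓ : ℕ} {F G : Set (Fin ℓ → ℝ)} {I : Set ℝ} {φ : ℝ → (Fin ℓ → ℝ) → (Fin ℓ → ℝ)}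

def familyMap (φ : ℝ → (Fin ℓ → ℝ) → (Fin ℓ → ℝ)) (x : Fin (ℓ + 1) → ℝ) : Fin (ℓ + 1) → ℝ :=
  Fin.cons (x 0) (φ (x 0) (Fin.tail x))

theorem image_familyMap_consProd_subset {A : Set ℝ} {B D : Set (Fin ℓ → ℝ)}
    (h : ∀ l ∈ A, φ l '' B ⊆ D) : familyMap φ '' consProd A B ⊆ consProd A D := by
  rintro _ ⟨x, ⟨hx₀, hx⟩, rfl⟩
  exact ⟨by simpa [familyMap] using hx₀, by simpa [familyMap] using h _ hx₀ ⟨_, hx, rfl⟩⟩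

theorem image_familyMap_consProd (h : ∀ l ∈ I, φ l '' F = G) :
    familyMap φ '' consProd I F = consProd I G := by
  refine (image_familyMap_consProd_subset fun l hl => (h l hl).subset).antisymm ?_
  rintro y ⟨hy₀, hy⟩
  obtain ⟨z, hz, hzy⟩ : Fin.tail y ∈ φ (y 0) '' F := (h _ hy₀).symm ▸ hy
  refine ⟨Fin.cons (y 0) z, ⟨by simpa using hy₀, by simpa using hz⟩, ?_⟩
  simp [familyMap, hzy]

theorem precellular_familyMap (h : ∀ l ∈ I, Precellular F (φ l)) :
    Precellular (consProd I F) (familyMap φ) := by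
  refine ⟨fun i x hx y hy hxy => ?_, fun i x hx y hy hxy hlt => ?_⟩
  · induction i using Fin.cases with
    | zero => exact hxy 0 le_rfl
    | succ j =>
      have h₀ : x 0 = y 0 := hxy 0 (Fin.zero_le _)
      simp only [familyMap, Fin.cons_succ, ← h₀]
      exact (h _ hx.1).1 j _ hx.2 _ hy.2 fun k hk => hxy k.succ (Fin.succ_le_succ_iff.2 hk)
  · induction i using Fin.cases with
    | zero => exact hlt
    | succ j =>
      have h₀ : x 0 = y 0 := hxy 0 (Fin.succ_pos j)
      simp only [familyMap, Fin.cons_succ, ← h₀]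
      exact (h _ hx.1).2 j _ hx.2 _ hy.2 (fun k hk => hxy k.succ (Fin.succ_lt_succ_iff.2 hk)) hlt

theorem continuousOn_familyMap {A : Set ℝ} {B : Set (Fin ℓ → ℝ)}
    (h : ContinuousOn (fun p : ℝ × (Fin ℓ → ℝ) => φ p.1 p.2) (A ×ˢ B)) :
    ContinuousOn (familyMap φ) (consProd A B) := by
  have hsplit : Continuous fun x : Fin (ℓ + 1) → ℝ => (x 0, Fin.tail x) :=
    (continuous_apply 0).prodMk continuous_id.finTail
  have hφ := h.comp hsplit.continuousOn fun _ hx => hx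
  exact fun x hx => (continuous_apply 0).continuousWithinAt.finCons (hφ x hx)

theorem exists_cell_forall_image_subset (hce : ∀ l ∈ I, ∀ m ∈ I, CombEquiv F G (φ l) (φ m))
    {t : ℝ} (ht : t ∈ I) {B : Set (Fin ℓ → ℝ)} (hB : B ∈ cellsOf F) :
    ∃ D ∈ cellsOf G, ∀ l ∈ I, φ l '' B ⊆ D := by
  obtain ⟨D, hD, hφtD, -⟩ := hce t ht t ht B hB
  refine ⟨D, hD, fun l hl => ?_⟩
  obtain ⟨E, hE, hφlE, hφtE⟩ := hce l hl t ht B hB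
  obtain ⟨x, hx⟩ := hB.1.nonempty_s4
  rwa [hE.1.eq_of_mem hD.1 (hφtE ⟨x, hx, rfl⟩) (hφtD ⟨x, hx, rfl⟩)] at hφlE

theorem morphism_familyMap (hmor : ∀ l ∈ I, Morphism F G (φ l))
    (hce : ∀ l ∈ I, ∀ m ∈ I, CombEquiv F G (φ l) (φ m))
    (hcont : ∀ C ∈ cellsOf F,
      ContinuousOn (fun p : ℝ × (Fin ℓ → ℝ) => φ p.1 p.2) (I ×ˢ C)) :
    Morphism (consProd I F) (consProd I G) (familyMap φ) := by
  refine ⟨image_familyMap_consProd fun l hl => (hmor l hl).1,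
    precellular_familyMap fun l hl => (hmor l hl).2.1, ?_⟩
  rintro C ⟨hC, hCF⟩
  obtain ⟨A, B, hA, hB, rfl⟩ := hC.exists_eq_consProd
  obtain ⟨hAI, hBF⟩ := (consProd_subset_consProd_iff hA.nonempty_s4 hB.nonempty_s4).1 hCF
  obtain ⟨t, ht⟩ := hA.nonempty_s4
  obtain ⟨D, ⟨hD, hDG⟩, hBD⟩ := exists_cell_forall_image_subset hce (hAI ht) ⟨hB, hBF⟩
  refine ⟨⟨consProd A D, ⟨cell_consProd hA hD, consProd_mono hAI hDG⟩,
    image_familyMap_consProd_subset fun l hl => hBD l (hAI hl)⟩, ?_⟩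
  exact continuousOn_familyMap ((hcont B ⟨hB, hBF⟩).mono (prod_mono hAI subset_rfl))

end FamilyMap

theorem family_of_combEquiv_morphisms_is_morphism_general {ℓ : ℕ} (F G : Set (Fin ℓ → ℝ))
    (φ : ℝ → (Fin ℓ → ℝ) → (Fin ℓ → ℝ))
    (hmor : ∀ l ∈ Set.Ioo (0 : ℝ) 1, Morphism F G (φ l))
    (hce : ∀ l ∈ Set.Ioo (0 : ℝ) 1, ∀ m ∈ Set.Ioo (0 : ℝ) 1, CombEquiv F G (φ l) (φ m))
    (hcont : ∀ C ∈ cellsOf F,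
      ContinuousOn (fun p : ℝ × (Fin ℓ → ℝ) => φ p.1 p.2) (Set.Ioo (0 : ℝ) 1 ×ˢ C)) :
    Morphism {x : Fin (ℓ + 1) → ℝ | x 0 ∈ Set.Ioo (0 : ℝ) 1 ∧ Fin.tail x ∈ F}
      {x : Fin (ℓ + 1) → ℝ | x 0 ∈ Set.Ioo (0 : ℝ) 1 ∧ Fin.tail x ∈ G}
      (fun x => Fin.cons (x 0) (φ (x 0) (Fin.tail x))) :=
  morphism_familyMap hmor hce hcont

/-- A definable-family version: a family `{φ_λ}_{λ ∈ (0,1)}` of pairwise combinatorially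
equivalent morphisms `ℱ → 𝒢`, jointly continuous in `(λ, x)` on `(0,1) × 𝒞` for each integer
cell `𝒞` of `ℱ`, yields a morphism `(0,1) × ℱ → (0,1) × 𝒢`, `(λ, x) ↦ (λ, φ_λ(x))`. -/
theorem family_of_combEquiv_morphisms_is_morphism {ℓ : ℕ} (F G : Set (Fin ℓ → ℝ))
    (hF : Fort ℓ F) (hG : Fort ℓ G)
    (φ : ℝ → (Fin ℓ → ℝ) → (Fin ℓ → ℝ))
    (hmor : ∀ l ∈ Set.Ioo (0 : ℝ) 1, Morphism F G (φ l))
    (hce : ∀ l ∈ Set.Ioo (0 : ℝ) 1, ∀ m ∈ Set.Ioo (0 : ℝ) 1, CombEquiv F G (φ l) (φ m))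
    (hcont : ∀ C ∈ cellsOf F,
      ContinuousOn (fun p : ℝ × (Fin ℓ → ℝ) => φ p.1 p.2) (Set.Ioo (0 : ℝ) 1 ×ˢ C)) :
    Morphism {x : Fin (ℓ + 1) → ℝ | x 0 ∈ Set.Ioo (0 : ℝ) 1 ∧ Fin.tail x ∈ F}
      {x : Fin (ℓ + 1) → ℝ | x 0 ∈ Set.Ioo (0 : ℝ) 1 ∧ Fin.tail x ∈ G}
      (fun x => Fin.cons (x 0) (φ (x 0) (Fin.tail x))) :=
  family_of_combEquiv_morphisms_is_morphism_general F G φ hmor hce hcont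

end Forts
end

section
/- Let φ: ℱ→𝒢 be a morphism of forts of length ℓ, let 1≤i<ℓ, and let 𝒞 be an integer cell of π_i(ℱ). Then for every two points x,x′∈𝒞 the fiber morphisms φ_x := φ(x,·): ℱ(𝒞)→𝒢_{φ_{1…i}(x)} and φ_{x′} := φ(x′,·): ℱ(𝒞)→𝒢_{φ_{1…i}(x′)} are morphisms between the same pair of forts and are combinatorially equivalent. (Here φ_{1…i}(x) and φ_{1…i}(x′) lie in the same integer cell 𝒞″ of π_i(𝒢), so both targets equal 𝒢(𝒞″).) -/
open Set

/-! A fort is a union of integer cells, so its fiber over a point only depends on the integer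
cell of that point. A morphism `φ` maps the integer cell of a point into the integer cell of its
image, and by precellularity the first `i` coordinates of `φ w` depend only, and (by strict
monotonicity) injectively, on the first `i` coordinates of `w`. Hence `φ` restricts to morphisms
of fibers, and the cell of `φ_x` on a cell `𝒟` of the fiber is the cell of `φ` on `𝒞 × 𝒟`, which
is the same for all `x ∈ 𝒞`. -/

namespace Forts

noncomputable def cell1Of (r : ℝ) : Set ℝ :=
  if (⌊r⌋ : ℝ) = r then {r} else Ioo (⌊r⌋ : ℝ) (⌊r⌋ + 1)

theorem mem_cell1Of (r : ℝ) : r ∈ cell1Of r := by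
  unfold cell1Of
  split_ifs with hr
  · exact mem_singleton r
  · exact ⟨(Int.floor_le r).lt_of_ne hr, Int.lt_floor_add_one r⟩

theorem cell1_cell1Of (r : ℝ) : Cell1 (cell1Of r) := by
  unfold cell1Of
  split_ifs with hr
  · exact ⟨⌊r⌋, Or.inl (by rw [hr])⟩
  · exact ⟨⌊r⌋, Or.inr rfl⟩

theorem Cell1.eq_cell1Of {A : Set ℝ} (hA : Cell1 A) {r : ℝ} (hr : r ∈ A) : A = cell1Of r := by
  obtain ⟨k, rfl | rfl⟩ := hA
  · rw [mem_singleton_iff.1 hr, cell1Of, Int.floor_intCast, if_pos rfl]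
  · have hfloor : ⌊r⌋ = k := Int.floor_eq_iff.2 ⟨hr.1.le, hr.2⟩
    rw [cell1Of, hfloor, if_neg (by linarith [hr.1])]

theorem cell1Of_subset_Ioo {a b : ℤ} {r : ℝ} (hr : r ∈ Ioo (a : ℝ) b) :
    cell1Of r ⊆ Ioo (a : ℝ) b := by
  unfold cell1Of
  split_ifs
  · exact singleton_subset_iff.2 hr
  · have ha : a ≤ ⌊r⌋ := Int.le_floor.2 hr.1.le
    have hb : ⌊r⌋ < b := Int.floor_lt.2 hr.2
    refine Ioo_subset_Ioo ?_ ?_ <;> exact_mod_cast (by omega)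

def cellOf {ℓ : ℕ} (w : Fin ℓ → ℝ) : Set (Fin ℓ → ℝ) := {x | ∀ j, x j ∈ cell1Of (w j)}

theorem mem_cellOf {ℓ : ℕ} (w : Fin ℓ → ℝ) : w ∈ cellOf w := fun _ => mem_cell1Of _

theorem cell_cellOf {ℓ : ℕ} (w : Fin ℓ → ℝ) : Cell (cellOf w) :=
  ⟨fun j => cell1Of (w j), fun _ => cell1_cell1Of _, rfl⟩

theorem mem_cellOf_comm {ℓ : ℕ} {w w' : Fin ℓ → ℝ} (hw' : w' ∈ cellOf w) : w ∈ cellOf w' :=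
  fun j => (cell1_cell1Of (w j)).eq_cell1Of (hw' j) ▸ mem_cell1Of (w j)

theorem Cell.eq_cellOf {ℓ : ℕ} {C : Set (Fin ℓ → ℝ)} (hC : Cell C) {w : Fin ℓ → ℝ}
    (hw : w ∈ C) : C = cellOf w := by
  obtain ⟨c, hc, rfl⟩ := hC
  ext x
  simp only [cellOf, mem_ofPred_eq, fun j => (hc j).eq_cell1Of (hw j)]

theorem Cell.nonempty_s7 {ℓ : ℕ} {C : Set (Fin ℓ → ℝ)} (hC : Cell C) : C.Nonempty := by
  obtain ⟨c, hc, rfl⟩ := hC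
  have hne : ∀ j, (c j).Nonempty := fun j => by
    obtain ⟨k, hk | hk⟩ := hc j
    · exact hk ▸ singleton_nonempty _
    · exact hk ▸ nonempty_Ioo.2 (lt_add_one _)
  exact ⟨fun j => (hne j).some, fun j => (hne j).some_mem⟩

theorem exists_eq_cellOf_of_mem_cellsOf {ℓ : ℕ} {S D : Set (Fin ℓ → ℝ)} (hD : D ∈ cellsOf S) :
    ∃ y ∈ S, D = cellOf y :=
  let ⟨y, hy⟩ := hD.1.nonempty_s7
  ⟨y, hD.2 hy, hD.1.eq_cellOf hy⟩

theorem Fort.cellOf_subset {ℓ : ℕ} {F : Set (Fin ℓ → ℝ)} (hF : Fort ℓ F) {w : Fin ℓ → ℝ}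
    (hw : w ∈ F) : cellOf w ⊆ F := by
  induction hF with
  | base n _ =>
    intro x hx
    simpa using cell1Of_subset_Ioo (a := 0) (b := n) (by simpa using hw) (hx 0)
  | step F1 s _ _ _ ih =>
    obtain ⟨C, hC, hw0, hwt⟩ := hw
    intro x hx
    refine ⟨C, hC, ?_, ih C hC hwt fun j => hx j.succ⟩
    rw [hC.1.eq_cellOf hw0]
    exact fun _ => hx 0

theorem Fort.cellOf_mem_cellsOf {ℓ : ℕ} {F : Set (Fin ℓ → ℝ)} (hF : Fort ℓ F) {w : Fin ℓ → ℝ}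
    (hw : w ∈ F) : cellOf w ∈ cellsOf F :=
  ⟨cell_cellOf w, hF.cellOf_subset hw⟩

section Glue

variable {ℓ i : ℕ} (h : i ≤ ℓ)

theorem proj_glue (x : Fin i → ℝ) (y : Fin (ℓ - i) → ℝ) : proj i h (glue h x y) = x := by
  funext j
  simp [proj, glue]

theorem tailpart_glue (x : Fin i → ℝ) (y : Fin (ℓ - i) → ℝ) : tailpart h (glue h x y) = y := by
  funext j
  simp [tailpart, glue]

theorem glue_proj_tailpart (w : Fin ℓ → ℝ) : glue h (proj i h w) (tailpart h w) = w := by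
  funext j
  by_cases hj : (j : ℕ) < i
  · simp [glue, proj, hj]
  · simp only [glue, tailpart, hj, dite_false]
    congr
    omega

theorem proj_eq_iff {w w' : Fin ℓ → ℝ} :
    proj i h w = proj i h w' ↔ ∀ j : Fin ℓ, (j : ℕ) < i → w j = w' j :=
  ⟨fun he j hj => congrFun he ⟨j, hj⟩, fun he => funext fun j => he _ j.2⟩

theorem proj_mem_cellOf {w w' : Fin ℓ → ℝ} (hw' : w' ∈ cellOf w) :
    proj i h w' ∈ cellOf (proj i h w) :=
  fun _ => hw' _

theorem tailpart_mem_cellOf {w w' : Fin ℓ → ℝ} (hw' : w' ∈ cellOf w) :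
    tailpart h w' ∈ cellOf (tailpart h w) :=
  fun _ => hw' _

theorem glue_mem_cellOf {x x' : Fin i → ℝ} {y y' : Fin (ℓ - i) → ℝ} (hx' : x' ∈ cellOf x)
    (hy' : y' ∈ cellOf y) : glue h x' y' ∈ cellOf (glue h x y) := by
  intro j
  by_cases hj : (j : ℕ) < i
  · simpa [glue, hj] using hx' _
  · simpa [glue, hj] using hy' _

theorem continuous_glue (x : Fin i → ℝ) : Continuous (glue h x) :=
  continuous_pi fun j => by
    by_cases hj : (j : ℕ) < i
    · simpa [glue, hj] using continuous_const
    · simpa [glue, hj] using continuous_apply _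

theorem continuous_tailpart : Continuous (tailpart (ℓ := ℓ) h) :=
  continuous_pi fun _ => continuous_apply _

theorem Fort.mem_fiber_of_mem_cellOf {F : Set (Fin ℓ → ℝ)} (hF : Fort ℓ F) {x x' : Fin i → ℝ}
    {y y' : Fin (ℓ - i) → ℝ} (hy : y ∈ fiber h F x) (hx' : x' ∈ cellOf x) (hy' : y' ∈ cellOf y) :
    y' ∈ fiber h F x' :=
  hF.cellOf_subset hy (glue_mem_cellOf h hx' hy')

theorem Fort.fiber_eq_of_mem_cellOf {F : Set (Fin ℓ → ℝ)} (hF : Fort ℓ F) {x x' : Fin i → ℝ}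
    (hx' : x' ∈ cellOf x) : fiber h F x = fiber h F x' :=
  Subset.antisymm (fun y hy => hF.mem_fiber_of_mem_cellOf h hy hx' (mem_cellOf y))
    (fun y hy => hF.mem_fiber_of_mem_cellOf h hy (mem_cellOf_comm hx') (mem_cellOf y))

theorem Fort.cellOf_mem_cellsOf_fiber {F : Set (Fin ℓ → ℝ)} (hF : Fort ℓ F) {x : Fin i → ℝ}
    {y : Fin (ℓ - i) → ℝ} (hy : y ∈ fiber h F x) : cellOf y ∈ cellsOf (fiber h F x) :=
  ⟨cell_cellOf y, fun _ => hF.mem_fiber_of_mem_cellOf h hy (mem_cellOf x)⟩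

end Glue

namespace Precellular

variable {ℓ : ℕ} {X : Set (Fin ℓ → ℝ)} {f : (Fin ℓ → ℝ) → (Fin ℓ → ℝ)} {i : ℕ} (h : i ≤ ℓ)
  {w w' : Fin ℓ → ℝ}

theorem proj_apply_eq (hf : Precellular X f) (hw : w ∈ X) (hw' : w' ∈ X)
    (he : proj i h w = proj i h w') : proj i h (f w) = proj i h (f w') := by
  rw [proj_eq_iff] at he ⊢
  exact fun j hj => hf.1 j w hw w' hw' fun k hk => he k (lt_of_le_of_lt hk hj)

theorem proj_eq_of_proj_apply_eq (hf : Precellular X f) (hw : w ∈ X) (hw' : w' ∈ X)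
    (he : proj i h (f w) = proj i h (f w')) : proj i h w = proj i h w' := by
  rw [proj_eq_iff] at he ⊢
  intro j hj
  induction j using WellFoundedLT.induction with
  | _ j ih =>
    have hagree : ∀ k < j, w k = w' k := fun k hk => ih k hk (lt_trans hk hj)
    rcases lt_trichotomy (w j) (w' j) with hlt | heq | hgt
    · exact absurd (he j hj) (hf.2 j w hw w' hw' hagree hlt).ne
    · exact heq
    · exact absurd (he j hj) (hf.2 j w' hw' w hw (fun k hk => (hagree k hk).symm) hgt).ne'

end Precellular

/-- The paper's fiber map `φ_x = φ(x, ·)`. -/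
def fiberMap {ℓ i : ℕ} (h : i ≤ ℓ) (φ : (Fin ℓ → ℝ) → (Fin ℓ → ℝ)) (x : Fin i → ℝ) :
    (Fin (ℓ - i) → ℝ) → (Fin (ℓ - i) → ℝ) :=
  fun y => tailpart h (φ (glue h x y))

theorem Precellular.fiberMap {ℓ i : ℕ} (h : i ≤ ℓ) {X : Set (Fin ℓ → ℝ)}
    {f : (Fin ℓ → ℝ) → (Fin ℓ → ℝ)} (hf : Precellular X f) (x : Fin i → ℝ) :
    Precellular (fiber h X x) (fiberMap h f x) := by
  have glue_congr : ∀ {y y' : Fin (ℓ - i) → ℝ} {n : ℕ} {k : Fin ℓ}, (k : ℕ) < i + n →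
      (∀ j : Fin (ℓ - i), (j : ℕ) < n → y j = y' j) → glue h x y k = glue h x y' k := by
    intro y y' n k hk hyy'
    simp only [glue]
    split_ifs
    · rfl
    · exact hyy' _ (by simp only; omega)
  refine ⟨fun j y hy y' hy' hyy' => hf.1 _ _ hy _ hy' fun k hk => ?_,
    fun j y hy y' hy' hyy' hlt => hf.2 _ _ hy _ hy' (fun k hk => ?_) (by simpa [glue] using hlt)⟩
  · exact glue_congr (n := j + 1) (Nat.lt_succ_of_le hk)
      fun j' hj' => hyy' j' (Nat.le_of_lt_succ hj')
  · exact glue_congr hk hyy'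

namespace Morphism

variable {ℓ : ℕ} {F G : Set (Fin ℓ → ℝ)} {φ : (Fin ℓ → ℝ) → (Fin ℓ → ℝ)}

theorem apply_mem_cellOf (hF : Fort ℓ F) (hφ : Morphism F G φ) {w w' : Fin ℓ → ℝ} (hw : w ∈ F)
    (hw' : w' ∈ cellOf w) : φ w' ∈ cellOf (φ w) := by
  obtain ⟨⟨C₂, hC₂, hφC₂⟩, -⟩ := hφ.2.2 _ (hF.cellOf_mem_cellsOf hw)
  rw [hC₂.1.eq_cellOf (hφC₂ (mem_image_of_mem φ (mem_cellOf w)))] at hφC₂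
  exact hφC₂ (mem_image_of_mem φ hw')

variable {i : ℕ} (h : i ≤ ℓ)

theorem proj_apply_mem_cellOf (hF : Fort ℓ F) (hφ : Morphism F G φ) {z z' : Fin ℓ → ℝ}
    (hz : z ∈ F) (hz' : z' ∈ F) (hx : proj i h z' ∈ cellOf (proj i h z)) :
    proj i h (φ z') ∈ cellOf (proj i h (φ z)) := by
  set w := glue h (proj i h z') (tailpart h z)
  have hw : w ∈ cellOf z := glue_proj_tailpart h z ▸ glue_mem_cellOf h hx (mem_cellOf _)
  rw [← hφ.2.1.proj_apply_eq h (hF.cellOf_subset hz hw) hz' (proj_glue h _ _)]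
  exact proj_mem_cellOf h (hφ.apply_mem_cellOf hF hz hw)

theorem image_fiberMap (hφ : Morphism F G φ) {z : Fin ℓ → ℝ} (hz : z ∈ F) :
    fiberMap h φ (proj i h z) '' fiber h F (proj i h z) = fiber h G (proj i h (φ z)) := by
  obtain ⟨rfl, hpre, -⟩ := hφ
  ext u
  constructor
  · rintro ⟨y, hy, rfl⟩
    have hproj := hpre.proj_apply_eq h hy hz (proj_glue h _ y)
    show glue h _ (tailpart h _) ∈ φ '' F
    rw [← hproj, glue_proj_tailpart]
    exact mem_image_of_mem φ hy
  · rintro ⟨w, hw, hwu⟩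
    have hproj : proj i h z = proj i h w :=
      hpre.proj_eq_of_proj_apply_eq h hz hw (by rw [hwu, proj_glue])
    refine ⟨tailpart h w, ?_, ?_⟩
    · rwa [fiber, mem_ofPred_eq, hproj, glue_proj_tailpart]
    · rw [fiberMap, hproj, glue_proj_tailpart, hwu, tailpart_glue]

theorem fiberMap_mem_cellOf (hF : Fort ℓ F) (hφ : Morphism F G φ) {x x' : Fin i → ℝ}
    {y y' : Fin (ℓ - i) → ℝ} (hy : y ∈ fiber h F x) (hx' : x' ∈ cellOf x)
    (hy' : y' ∈ cellOf y) : fiberMap h φ x' y' ∈ cellOf (fiberMap h φ x y) :=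
  tailpart_mem_cellOf h (hφ.apply_mem_cellOf hF hy (glue_mem_cellOf h hx' hy'))

theorem cellOf_fiberMap_mem_cellsOf (hG : Fort ℓ G) (hφ : Morphism F G φ) {z : Fin ℓ → ℝ}
    (hz : z ∈ F) {y : Fin (ℓ - i) → ℝ} (hy : y ∈ fiber h F (proj i h z)) :
    cellOf (fiberMap h φ (proj i h z) y) ∈ cellsOf (fiber h G (proj i h (φ z))) :=
  hG.cellOf_mem_cellsOf_fiber h (hφ.image_fiberMap h hz ▸ mem_image_of_mem _ hy)

theorem morphism_fiberMap (hF : Fort ℓ F) (hG : Fort ℓ G) (hφ : Morphism F G φ) {z : Fin ℓ → ℝ}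
    (hz : z ∈ F) :
    Morphism (fiber h F (proj i h z)) (fiber h G (proj i h (φ z))) (fiberMap h φ (proj i h z)) := by
  refine ⟨hφ.image_fiberMap h hz, hφ.2.1.fiberMap h _, fun D hD => ?_⟩
  obtain ⟨y, hy, rfl⟩ := exists_eq_cellOf_of_mem_cellsOf hD
  have hmaps : MapsTo (glue h (proj i h z)) (cellOf y) (cellOf (glue h (proj i h z) y)) :=
    fun _ hy' => glue_mem_cellOf h (mem_cellOf _) hy'
  refine ⟨⟨_, hφ.cellOf_fiberMap_mem_cellsOf h hG hz hy, ?_⟩, ?_⟩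
  · rintro _ ⟨y', hy', rfl⟩
    exact hφ.fiberMap_mem_cellOf h hF hy (mem_cellOf _) hy'
  · exact (continuous_tailpart h).comp_continuousOn
      ((hφ.2.2 _ (hF.cellOf_mem_cellsOf hy)).2.comp (continuous_glue h _).continuousOn hmaps)

theorem combEquiv_fiberMap (hF : Fort ℓ F) (hG : Fort ℓ G) (hφ : Morphism F G φ)
    {z z' : Fin ℓ → ℝ} (hz : z ∈ F) (hx : proj i h z' ∈ cellOf (proj i h z)) :
    CombEquiv (fiber h F (proj i h z)) (fiber h G (proj i h (φ z)))
      (fiberMap h φ (proj i h z)) (fiberMap h φ (proj i h z')) := by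
  intro D hD
  obtain ⟨y, hy, rfl⟩ := exists_eq_cellOf_of_mem_cellsOf hD
  refine ⟨_, hφ.cellOf_fiberMap_mem_cellsOf h hG hz hy, ?_, ?_⟩
  · rintro _ ⟨y', hy', rfl⟩
    exact hφ.fiberMap_mem_cellOf h hF hy (mem_cellOf _) hy'
  · rintro _ ⟨y', hy', rfl⟩
    exact hφ.fiberMap_mem_cellOf h hF hy hx hy'

end Morphism

theorem fiber_morphisms_combEquiv_general {ℓ i : ℕ} (h2 : i < ℓ)
    (F G : Set (Fin ℓ → ℝ)) (hF : Fort ℓ F) (hG : Fort ℓ G)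
    (φ : (Fin ℓ → ℝ) → (Fin ℓ → ℝ)) (hφ : Morphism F G φ)
    (C : Set (Fin i → ℝ)) (hC : C ∈ cellsOf (proj i h2.le '' F))
    (z z' : Fin ℓ → ℝ) (hz : z ∈ F) (hz' : z' ∈ F)
    (hzC : proj i h2.le z ∈ C) (hz'C : proj i h2.le z' ∈ C) :
    fiber h2.le F (proj i h2.le z) = fiber h2.le F (proj i h2.le z') ∧
    fiber h2.le G (proj i h2.le (φ z)) = fiber h2.le G (proj i h2.le (φ z')) ∧
    Morphism (fiber h2.le F (proj i h2.le z)) (fiber h2.le G (proj i h2.le (φ z)))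
      (fun y => tailpart h2.le (φ (glue h2.le (proj i h2.le z) y))) ∧
    Morphism (fiber h2.le F (proj i h2.le z')) (fiber h2.le G (proj i h2.le (φ z')))
      (fun y => tailpart h2.le (φ (glue h2.le (proj i h2.le z') y))) ∧
    CombEquiv (fiber h2.le F (proj i h2.le z)) (fiber h2.le G (proj i h2.le (φ z)))
      (fun y => tailpart h2.le (φ (glue h2.le (proj i h2.le z) y)))
      (fun y => tailpart h2.le (φ (glue h2.le (proj i h2.le z') y))) := by
  have hx : proj i h2.le z' ∈ cellOf (proj i h2.le z) := hC.1.eq_cellOf hzC ▸ hz'C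
  exact ⟨hF.fiber_eq_of_mem_cellOf h2.le hx,
    hG.fiber_eq_of_mem_cellOf h2.le (hφ.proj_apply_mem_cellOf h2.le hF hz hz' hx),
    hφ.morphism_fiberMap h2.le hF hG hz, hφ.morphism_fiberMap h2.le hF hG hz',
    hφ.combEquiv_fiberMap h2.le hF hG hz hx⟩

/-- Fiber morphisms of a morphism `φ : ℱ → 𝒢` over two points of the same integer cell `𝒞`
of `π_i(ℱ)` are morphisms between the same pair of forts and are combinatorially
equivalent. -/
theorem fiber_morphisms_combEquiv {ℓ i : ℕ} (h1 : 1 ≤ i) (h2 : i < ℓ)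
    (F G : Set (Fin ℓ → ℝ)) (hF : Fort ℓ F) (hG : Fort ℓ G)
    (φ : (Fin ℓ → ℝ) → (Fin ℓ → ℝ)) (hφ : Morphism F G φ)
    (C : Set (Fin i → ℝ)) (hC : C ∈ cellsOf (proj i h2.le '' F))
    (z z' : Fin ℓ → ℝ) (hz : z ∈ F) (hz' : z' ∈ F)
    (hzC : proj i h2.le z ∈ C) (hz'C : proj i h2.le z' ∈ C) :
    fiber h2.le F (proj i h2.le z) = fiber h2.le F (proj i h2.le z') ∧
    fiber h2.le G (proj i h2.le (φ z)) = fiber h2.le G (proj i h2.le (φ z')) ∧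
    Morphism (fiber h2.le F (proj i h2.le z)) (fiber h2.le G (proj i h2.le (φ z)))
      (fun y => tailpart h2.le (φ (glue h2.le (proj i h2.le z) y))) ∧
    Morphism (fiber h2.le F (proj i h2.le z')) (fiber h2.le G (proj i h2.le (φ z')))
      (fun y => tailpart h2.le (φ (glue h2.le (proj i h2.le z') y))) ∧
    CombEquiv (fiber h2.le F (proj i h2.le z)) (fiber h2.le G (proj i h2.le (φ z)))
      (fun y => tailpart h2.le (φ (glue h2.le (proj i h2.le z) y)))
      (fun y => tailpart h2.le (φ (glue h2.le (proj i h2.le z') y))) :=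
  fiber_morphisms_combEquiv_general h2 F G hF hG φ hφ C hC z z' hz hz' hzC hz'C

end Forts
end

section
/- Let C⊆ℝ^ℓ be a cell of length ℓ (constructed from continuous functions) and let 𝒞 be an integer cell of length ℓ having the same type as C. Then there exists a unique surjective natural cellular map A^{𝒞,C}: 𝒞→C. -/
open Set

namespace Forts

/-- Cells (in the o-minimal sense, built from continuous positive functions), together
with their type `τ ∈ {0,1}^ℓ` (here `false` = point factor, `true` = interval factor). -/
inductive IsCell : (ℓ : ℕ) → Set (Fin ℓ → ℝ) → (Fin ℓ → Bool) → Prop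
  | point (a : ℝ) : IsCell 1 {x : Fin 1 → ℝ | x 0 = a} (fun _ => false)
  | interval (a b : ℝ) (hab : a < b) :
      IsCell 1 {x : Fin 1 → ℝ | x 0 ∈ Set.Ioo a b} (fun _ => true)
  | graph {ℓ : ℕ} (C : Set (Fin ℓ → ℝ)) (τ : Fin ℓ → Bool) (f : (Fin ℓ → ℝ) → ℝ)
      (hC : IsCell ℓ C τ) (hfpos : ∀ x ∈ C, 0 < f x) (hf : ContinuousOn f C) :
      IsCell (ℓ + 1)
        {x : Fin (ℓ + 1) → ℝ | Fin.init x ∈ C ∧ x (Fin.last ℓ) = f (Fin.init x)}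
        (Fin.snoc τ false)
  | band {ℓ : ℕ} (C : Set (Fin ℓ → ℝ)) (τ : Fin ℓ → Bool) (f g : (Fin ℓ → ℝ) → ℝ)
      (hC : IsCell ℓ C τ) (hfpos : ∀ x ∈ C, 0 < f x)
      (hf : ContinuousOn f C) (hg : ContinuousOn g C) (hfg : ∀ x ∈ C, f x < g x) :
      IsCell (ℓ + 1)
        {x : Fin (ℓ + 1) → ℝ | Fin.init x ∈ C ∧
          f (Fin.init x) < x (Fin.last ℓ) ∧ x (Fin.last ℓ) < g (Fin.init x)}
        (Fin.snoc τ true)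

/-- An integer cell of type `τ`. -/
def CellTyped {ℓ : ℕ} (S : Set (Fin ℓ → ℝ)) (τ : Fin ℓ → Bool) : Prop :=
  ∃ c : Fin ℓ → Set ℝ,
    (∀ i, (τ i = true → ∃ k : ℤ, c i = Set.Ioo (k : ℝ) ((k : ℝ) + 1)) ∧
      (τ i = false → ∃ k : ℤ, c i = {(k : ℝ)})) ∧
    S = {x | ∀ i, x i ∈ c i}

/-- A map is natural on `X` if each coordinate function, with the earlier coordinates
fixed, is affine in the current coordinate. -/
def NaturalOn {ℓ : ℕ} (X : Set (Fin ℓ → ℝ)) (φ : (Fin ℓ → ℝ) → (Fin ℓ → ℝ)) : Prop :=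
  ∀ i : Fin ℓ, ∀ x ∈ X, ∃ a b : ℝ,
    ∀ z ∈ X, (∀ j : Fin ℓ, j < i → z j = x j) → φ z i = a * z i + b

/-!
Induction on the cell, with points and intervals read as `ℝ⁰ ⊙ a` and `ℝ⁰ ⊙ (a, b)`.
Given the unique map `φ : 𝒞₀ → C₀`, the map `(x, t) ↦ (φ x, f + (g - f) (t - k))` (with
`f, g` evaluated at `φ x`) is natural cellular onto `C₀ ⊙ (f, g)`. Conversely, a natural
cellular map `φ'` onto `C₀ ⊙ (f, g)`, restricted to a slice `t = t₀`, is natural cellular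
onto `C₀`, so its first coordinates are those of `φ`. Since `φ` is injective, each fibre
`{x} × (k, k + 1)` goes onto the fibre `(f, g)` over `φ x`, and an increasing affine bijection
between open intervals is determined by their endpoints. The graph case `C₀ ⊙ f` is the
same with a singleton fibre.
-/

variable {ℓ : ℕ}

theorem Precellular.injOn_s11 {X : Set (Fin ℓ → ℝ)} {φ : (Fin ℓ → ℝ) → (Fin ℓ → ℝ)}
    (h : Precellular X φ) : InjOn φ X := by
  intro x hx y hy hxy
  funext i
  induction i using WellFoundedLT.induction with
  | _ i ih =>
    rcases lt_trichotomy (x i) (y i) with hlt | heq | hgt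
    · exact absurd (congrFun hxy i) (h.2 i x hx y hy ih hlt).ne
    · exact heq
    · exact absurd (congrFun hxy i) (h.2 i y hy x hx (fun j hj => (ih j hj).symm) hgt).ne'

theorem Precellular.init_apply_eq {X : Set (Fin (ℓ + 1) → ℝ)}
    {φ : (Fin (ℓ + 1) → ℝ) → (Fin (ℓ + 1) → ℝ)} (h : Precellular X φ) {x w : Fin (ℓ + 1) → ℝ}
    (hx : x ∈ X) (hw : w ∈ X) (hxw : Fin.init x = Fin.init w) :
    Fin.init (φ x) = Fin.init (φ w) := by
  funext j
  refine h.1 j.castSucc x hx w hw fun k hk => ?_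
  obtain ⟨k, rfl⟩ := Fin.eq_castSucc_of_ne_last (hk.trans_lt (Fin.castSucc_lt_last j)).ne
  exact congrFun hxw k

theorem snoc_eq_snoc_of_le {x y : Fin ℓ → ℝ} {t : ℝ} {i : Fin ℓ} (h : ∀ j ≤ i, x j = y j) :
    ∀ j ≤ i.castSucc, Fin.snoc (α := fun _ => ℝ) x t j = Fin.snoc (α := fun _ => ℝ) y t j := by
  simpa [Fin.forall_fin_succ'] using h

theorem snoc_eq_snoc_of_lt {x y : Fin ℓ → ℝ} {t : ℝ} {i : Fin ℓ} (h : ∀ j < i, x j = y j) :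
    ∀ j < i.castSucc, Fin.snoc (α := fun _ => ℝ) x t j = Fin.snoc (α := fun _ => ℝ) y t j := by
  simpa [Fin.forall_fin_succ'] using h

theorem forall_lt_last_iff_init_eq {x y : Fin (ℓ + 1) → ℝ} :
    (∀ j < Fin.last ℓ, x j = y j) ↔ Fin.init x = Fin.init y := by
  simp [Fin.forall_fin_succ', funext_iff, Fin.init]

theorem affine_endpoints_of_image_Ioo {A B p q u v : ℝ} (hpq : p < q)
    (hmono : StrictMonoOn (fun t => A * t + B) (Ioo p q))
    (himage : (fun t => A * t + B) '' Ioo p q = Ioo u v) :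
    A * p + B = u ∧ A * q + B = v := by
  have hA : 0 < A := by
    have := hmono ⟨by linarith, by linarith⟩ ⟨by linarith, by linarith⟩
      (by linarith : (2 * p + q) / 3 < (p + 2 * q) / 3)
    nlinarith
  have hlt : A * p + B < A * q + B := by nlinarith
  rw [image_affine_Ioo hA] at himage
  have huv : u < v := nonempty_Ioo.1 (himage ▸ nonempty_Ioo.2 hlt)
  constructor
  · rw [← csInf_Ioo hlt, ← csInf_Ioo huv, himage]
  · rw [← csSup_Ioo hlt, ← csSup_Ioo huv, himage]

def NaturalCellularOnto (X Y : Set (Fin ℓ → ℝ)) (φ : (Fin ℓ → ℝ) → (Fin ℓ → ℝ)) : Prop :=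
  φ '' X = Y ∧ Precellular X φ ∧ ContinuousOn φ X ∧ NaturalOn X φ

def HasUniqueNaturalCellularMap (X Y : Set (Fin ℓ → ℝ)) : Prop :=
  ∃ φ, NaturalCellularOnto X Y φ ∧ ∀ φ', NaturalCellularOnto X Y φ' → EqOn φ φ' X

/-- The paper's `C ⊙ f` and `C ⊙ (f, g)` are `fibred C fun y => {f y}` and
`fibred C fun y => Ioo (f y) (g y)`. -/
def fibred (C : Set (Fin ℓ → ℝ)) (T : (Fin ℓ → ℝ) → Set ℝ) : Set (Fin (ℓ + 1) → ℝ) :=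
  {x | Fin.init x ∈ C ∧ x (Fin.last ℓ) ∈ T (Fin.init x)}

@[simp]
theorem snoc_mem_fibred {C : Set (Fin ℓ → ℝ)} {T : (Fin ℓ → ℝ) → Set ℝ} {y : Fin ℓ → ℝ} {t : ℝ} :
    Fin.snoc (α := fun _ => ℝ) y t ∈ fibred C T ↔ y ∈ C ∧ t ∈ T y := by
  simp [fibred]

def affineExtension (φ : (Fin ℓ → ℝ) → (Fin ℓ → ℝ)) (a b : (Fin ℓ → ℝ) → ℝ) :
    (Fin (ℓ + 1) → ℝ) → (Fin (ℓ + 1) → ℝ) := fun x =>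
  Fin.snoc (φ (Fin.init x)) (a (φ (Fin.init x)) * x (Fin.last ℓ) + b (φ (Fin.init x)))

section affineExtension

variable {IC C : Set (Fin ℓ → ℝ)} {S : Set ℝ} {φ : (Fin ℓ → ℝ) → (Fin ℓ → ℝ)}
  {a b : (Fin ℓ → ℝ) → ℝ}

theorem affineExtension_snoc (y : Fin ℓ → ℝ) (t : ℝ) :
    affineExtension φ a b (Fin.snoc y t) = Fin.snoc (φ y) (a (φ y) * t + b (φ y)) := by
  simp [affineExtension]

theorem image_affineExtension (hφ : φ '' IC = C) :
    affineExtension φ a b '' fibred IC (fun _ => S) =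
      fibred C fun y => (fun t => a y * t + b y) '' S := by
  ext z
  constructor
  · rintro ⟨x, ⟨hx, hxS⟩, rfl⟩
    rw [← Fin.snoc_init_self x, affineExtension_snoc, snoc_mem_fibred]
    exact ⟨hφ ▸ mem_image_of_mem φ hx, mem_image_of_mem _ hxS⟩
  · rintro ⟨hz, t, ht, hzt⟩
    rw [← hφ] at hz
    obtain ⟨y, hy, hyz⟩ := hz
    refine ⟨Fin.snoc y t, by simpa using ⟨hy, ht⟩, ?_⟩
    rw [affineExtension_snoc, hyz, show a (Fin.init z) * t + b (Fin.init z) = _ from hzt,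
      Fin.snoc_init_self]

theorem precellular_affineExtension (hφ : Precellular IC φ) (hφC : MapsTo φ IC C)
    (hmono : ∀ y ∈ C, StrictMonoOn (fun t => a y * t + b y) S) :
    Precellular (fibred IC fun _ => S) (affineExtension φ a b) := by
  constructor
  · intro i x hx y hy hxy
    cases i using Fin.lastCases with
    | last => rw [funext fun j => hxy j (Fin.le_last j)]
    | cast i =>
      simp only [affineExtension, Fin.snoc_castSucc]
      exact hφ.1 i _ hx.1 _ hy.1 fun j hj => hxy _ (Fin.castSucc_le_castSucc_iff.2 hj)
  · intro i x hx y hy hxy hlt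
    cases i using Fin.lastCases with
    | last =>
      have hinit : Fin.init x = Fin.init y := forall_lt_last_iff_init_eq.1 hxy
      simp only [affineExtension, Fin.snoc_last, hinit]
      exact hmono _ (hφC hy.1) hx.2 hy.2 hlt
    | cast i =>
      simp only [affineExtension, Fin.snoc_castSucc]
      exact hφ.2 i _ hx.1 _ hy.1 (fun j hj => hxy _ (Fin.castSucc_lt_castSucc_iff.2 hj)) hlt

theorem continuousOn_affineExtension (hφ : ContinuousOn φ IC) (hφC : MapsTo φ IC C)
    (ha : ContinuousOn a C) (hb : ContinuousOn b C) :
    ContinuousOn (affineExtension φ a b) (fibred IC fun _ => S) := by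
  have hinit : ContinuousOn (fun x : Fin (ℓ + 1) → ℝ => φ (Fin.init x)) (fibred IC fun _ => S) :=
    hφ.comp (continuous_id.finInit).continuousOn fun x hx => hx.1
  have hmaps : MapsTo (fun x : Fin (ℓ + 1) → ℝ => φ (Fin.init x)) (fibred IC fun _ => S) C :=
    fun x hx => hφC hx.1
  exact hinit.finSnoc (((ha.comp hinit hmaps).mul (continuous_apply _).continuousOn).add
    (hb.comp hinit hmaps))

theorem naturalOn_affineExtension (hφ : NaturalOn IC φ) :
    NaturalOn (fibred IC fun _ => S) (affineExtension φ a b) := by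
  intro i x hx
  cases i using Fin.lastCases with
  | last =>
    refine ⟨a (φ (Fin.init x)), b (φ (Fin.init x)), fun z _ hzx => ?_⟩
    simp [affineExtension, forall_lt_last_iff_init_eq.1 hzx]
  | cast i =>
    obtain ⟨A, B, hAB⟩ := hφ i _ hx.1
    refine ⟨A, B, fun z hz hzx => ?_⟩
    simp only [affineExtension, Fin.snoc_castSucc]
    exact hAB _ hz.1 fun j hj => hzx _ (Fin.castSucc_lt_castSucc_iff.2 hj)

theorem NaturalCellularOnto.affineExtension (hφ : NaturalCellularOnto IC C φ)
    (ha : ContinuousOn a C) (hb : ContinuousOn b C)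
    (hmono : ∀ y ∈ C, StrictMonoOn (fun t => a y * t + b y) S) :
    NaturalCellularOnto (fibred IC fun _ => S)
      (fibred C fun y => (fun t => a y * t + b y) '' S) (affineExtension φ a b) := by
  obtain ⟨himage, hpre, hcont, hnat⟩ := hφ
  have hφC : MapsTo φ IC C := himage ▸ mapsTo_image φ IC
  exact ⟨image_affineExtension himage, precellular_affineExtension hpre hφC hmono,
    continuousOn_affineExtension hcont hφC ha hb, naturalOn_affineExtension hnat⟩

end affineExtension

section uniqueness

variable {IC C : Set (Fin ℓ → ℝ)} {S : Set ℝ} {T : (Fin ℓ → ℝ) → Set ℝ}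
  {φ : (Fin ℓ → ℝ) → (Fin ℓ → ℝ)} {φ' : (Fin (ℓ + 1) → ℝ) → (Fin (ℓ + 1) → ℝ)} {t₀ : ℝ}

theorem NaturalCellularOnto.init_snoc
    (h : NaturalCellularOnto (fibred IC fun _ => S) (fibred C T) φ') (ht₀ : t₀ ∈ S)
    (hT : ∀ y ∈ C, (T y).Nonempty) :
    NaturalCellularOnto IC C fun y => Fin.init (φ' (Fin.snoc y t₀)) := by
  obtain ⟨himage, hpre, hcont, hnat⟩ := h
  have hsnoc : MapsTo (fun y => Fin.snoc (α := fun _ => ℝ) y t₀) IC (fibred IC fun _ => S) :=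
    fun y hy => snoc_mem_fibred.2 ⟨hy, ht₀⟩
  refine ⟨?_, ⟨?_, ?_⟩, ?_, ?_⟩
  · apply Subset.antisymm
    · rintro _ ⟨y, hy, rfl⟩
      exact (himage ▸ mem_image_of_mem φ' (hsnoc hy)).1
    · intro y hy
      obtain ⟨s, hs⟩ := hT y hy
      obtain ⟨w, hw, hwy⟩ := himage.symm ▸ snoc_mem_fibred.2 ⟨hy, hs⟩
      refine ⟨Fin.init w, hw.1, ?_⟩
      beta_reduce
      rw [hpre.init_apply_eq (hsnoc hw.1) hw (by simp), hwy, Fin.init_snoc]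
  · intro i x hx y hy hxy
    exact hpre.1 i.castSucc _ (hsnoc hx) _ (hsnoc hy) (snoc_eq_snoc_of_le hxy)
  · intro i x hx y hy hxy hlt
    exact hpre.2 i.castSucc _ (hsnoc hx) _ (hsnoc hy) (snoc_eq_snoc_of_lt hxy)
      (by simpa using hlt)
  · exact (continuous_id.finInit).comp_continuousOn
      (hcont.comp (by fun_prop : Continuous fun y => Fin.snoc (α := fun _ => ℝ) y t₀).continuousOn
        hsnoc)
  · intro i x hx
    obtain ⟨A, B, hAB⟩ := hnat i.castSucc _ (hsnoc hx)
    refine ⟨A, B, fun z hz hzx => ?_⟩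
    simpa [Fin.init] using hAB _ (hsnoc hz) (snoc_eq_snoc_of_lt hzx)

theorem init_apply_eq_of_unique (hφ : ∀ ψ, NaturalCellularOnto IC C ψ → EqOn φ ψ IC)
    (h : NaturalCellularOnto (fibred IC fun _ => S) (fibred C T) φ') (ht₀ : t₀ ∈ S)
    (hT : ∀ y ∈ C, (T y).Nonempty) :
    ∀ x ∈ fibred IC fun _ => S, Fin.init (φ' x) = φ (Fin.init x) := by
  intro x hx
  rw [hφ _ (h.init_snoc ht₀ hT) hx.1]
  exact h.2.1.init_apply_eq hx (snoc_mem_fibred.2 ⟨hx.1, ht₀⟩) (by simp)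

theorem exists_affine_eq_on_fibre (hφ : NaturalCellularOnto IC C φ)
    (h : NaturalCellularOnto (fibred IC fun _ => S) (fibred C T) φ')
    (hinit : ∀ x ∈ fibred IC (fun _ => S), Fin.init (φ' x) = φ (Fin.init x))
    {x : Fin (ℓ + 1) → ℝ} (hx : x ∈ fibred IC fun _ => S) :
    ∃ A B : ℝ, φ' x (Fin.last ℓ) = A * x (Fin.last ℓ) + B ∧
      StrictMonoOn (fun t => A * t + B) S ∧ (fun t => A * t + B) '' S = T (φ (Fin.init x)) := by
  obtain ⟨himage, hpre, -, hnat⟩ := h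
  obtain ⟨A, B, hAB⟩ := hnat (Fin.last ℓ) x hx
  have hmem : ∀ t ∈ S, Fin.snoc (α := fun _ => ℝ) (Fin.init x) t ∈ fibred IC fun _ => S :=
    fun t ht => snoc_mem_fibred.2 ⟨hx.1, ht⟩
  have hfibre : ∀ t ∈ S, φ' (Fin.snoc (Fin.init x) t) (Fin.last ℓ) = A * t + B := fun t ht => by
    simpa using hAB _ (hmem t ht) (forall_lt_last_iff_init_eq.2 (by simp))
  refine ⟨A, B, hAB x hx fun _ _ => rfl, fun s hs t ht hst => ?_, ?_⟩
  · beta_reduce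
    rw [← hfibre s hs, ← hfibre t ht]
    exact hpre.2 _ _ (hmem s hs) _ (hmem t ht) (forall_lt_last_iff_init_eq.2 (by simp))
      (by simpa using hst)
  apply Subset.antisymm
  · rintro _ ⟨t, ht, rfl⟩
    have hφ't := (himage ▸ mem_image_of_mem φ' (hmem t ht)).2
    rwa [hinit _ (hmem t ht), Fin.init_snoc, hfibre t ht] at hφ't
  · intro s hs
    have hφx : φ (Fin.init x) ∈ C := hφ.1 ▸ mem_image_of_mem φ hx.1
    obtain ⟨w, hw, hws⟩ := himage.symm ▸ snoc_mem_fibred.2 ⟨hφx, hs⟩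
    have hwx : Fin.init w = Fin.init x := hφ.2.1.injOn_s11 hw.1 hx.1 (by
      rw [← hinit w hw, hws, Fin.init_snoc])
    refine ⟨w (Fin.last ℓ), hw.2, ?_⟩
    beta_reduce
    rw [← hfibre _ hw.2, ← hwx, Fin.snoc_init_self, hws, Fin.snoc_last]

end uniqueness

namespace HasUniqueNaturalCellularMap

variable {IC C : Set (Fin ℓ → ℝ)} {f g : (Fin ℓ → ℝ) → ℝ}

theorem graph (h : HasUniqueNaturalCellularMap IC C) (hf : ContinuousOn f C) (k : ℝ) :
    HasUniqueNaturalCellularMap (fibred IC fun _ => {k}) (fibred C fun y => {f y}) := by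
  obtain ⟨φ, hφ, hφ_unique⟩ := h
  have hgraph : (fibred C fun y => {f y}) = fibred C fun y => (fun t => 0 * t + f y) '' {k} := by
    simp
  refine ⟨affineExtension φ (fun _ => 0) f, ?_, fun φ' hφ' x hx => ?_⟩
  · rw [hgraph]
    exact hφ.affineExtension continuousOn_const hf fun _ _ => subsingleton_singleton.strictMonoOn _
  have hinit := init_apply_eq_of_unique hφ_unique hφ' (mem_singleton k)
    (fun y _ => singleton_nonempty (f y)) x hx
  have hlast : φ' x (Fin.last ℓ) = f (φ (Fin.init x)) := by
    have hφ'x : φ' x ∈ fibred C fun y => {f y} := hφ'.1 ▸ mem_image_of_mem φ' hx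
    rw [← hinit]
    exact hφ'x.2
  rw [← Fin.snoc_init_self (φ' x), hinit, hlast]
  simp [affineExtension]

theorem band (h : HasUniqueNaturalCellularMap IC C) (hf : ContinuousOn f C)
    (hg : ContinuousOn g C) (hfg : ∀ y ∈ C, f y < g y) (k : ℝ) :
    HasUniqueNaturalCellularMap (fibred IC fun _ => Ioo k (k + 1))
      (fibred C fun y => Ioo (f y) (g y)) := by
  obtain ⟨φ, hφ, hφ_unique⟩ := h
  have hslope : ∀ y ∈ C, 0 < g y - f y := fun y hy => sub_pos.2 (hfg y hy)
  have hband : (fibred C fun y => Ioo (f y) (g y)) = fibred C fun y =>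
      (fun t => (g y - f y) * t + (f y - (g y - f y) * k)) '' Ioo k (k + 1) := by
    ext x
    refine and_congr_right fun hx => ?_
    beta_reduce
    rw [image_affine_Ioo (hslope _ hx)]
    ring_nf
  refine ⟨affineExtension φ (fun y => g y - f y) (fun y => f y - (g y - f y) * k), ?_,
    fun φ' hφ' x hx => ?_⟩
  · rw [hband]
    exact hφ.affineExtension (hg.sub hf) (hf.sub ((hg.sub hf).mul continuousOn_const))
      fun y hy => ((strictMono_mul_left_of_pos (hslope y hy)).add_const _).strictMonoOn _
  have hk : k + 1 / 2 ∈ Ioo k (k + 1) := ⟨by linarith, by linarith⟩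
  have hinit := init_apply_eq_of_unique hφ_unique hφ' hk fun y hy => nonempty_Ioo.2 (hfg y hy)
  obtain ⟨A, B, hx_last, hmono, himage⟩ := exists_affine_eq_on_fibre hφ hφ' hinit hx
  obtain ⟨hAf, hAg⟩ := affine_endpoints_of_image_Ioo (by linarith) hmono himage
  rw [← Fin.snoc_init_self (φ' x), hinit x hx, hx_last]
  simp only [affineExtension]
  congr 1
  linear_combination (k - x (Fin.last ℓ)) * (hAg - hAf) - hAf

end HasUniqueNaturalCellularMap

theorem CellTyped.exists_eq_fibred {IC : Set (Fin (ℓ + 1) → ℝ)} {τ : Fin (ℓ + 1) → Bool}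
    (h : CellTyped IC τ) :
    ∃ IC₀ S, CellTyped IC₀ (Fin.init τ) ∧
      (τ (Fin.last ℓ) = true → ∃ k : ℤ, S = Ioo (k : ℝ) (k + 1)) ∧
      (τ (Fin.last ℓ) = false → ∃ k : ℤ, S = {(k : ℝ)}) ∧ IC = fibred IC₀ fun _ => S := by
  obtain ⟨c, hc, rfl⟩ := h
  refine ⟨{x | ∀ i, x i ∈ c i.castSucc}, c (Fin.last ℓ), ⟨_, fun i => hc i.castSucc, rfl⟩,
    (hc _).1, (hc _).2, ?_⟩
  ext x
  simp [fibred, Fin.forall_fin_succ', Fin.init]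

theorem CellTyped.eq_univ {IC : Set (Fin 0 → ℝ)} {τ : Fin 0 → Bool} (h : CellTyped IC τ) :
    IC = univ := by
  obtain ⟨c, -, rfl⟩ := h
  exact eq_univ_of_forall fun _ i => i.elim0

theorem hasUniqueNaturalCellularMap_univ_zero :
    HasUniqueNaturalCellularMap (univ : Set (Fin 0 → ℝ)) univ :=
  ⟨id, ⟨image_id _, ⟨fun i => i.elim0, fun i => i.elim0⟩, continuousOn_id, fun i => i.elim0⟩,
    fun _ _ _ _ => Subsingleton.elim _ _⟩

theorem IsCell.hasUniqueNaturalCellularMap {C : Set (Fin ℓ → ℝ)} {τ : Fin ℓ → Bool}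
    (hC : IsCell ℓ C τ) {IC : Set (Fin ℓ → ℝ)} (hIC : CellTyped IC τ) :
    HasUniqueNaturalCellularMap IC C := by
  induction hC with
  | point a =>
    obtain ⟨IC₀, S, hIC₀, -, hS, rfl⟩ := hIC.exists_eq_fibred
    obtain ⟨k, rfl⟩ := hS rfl
    have hC : {x : Fin 1 → ℝ | x 0 = a} = fibred univ fun _ => {a} := by
      ext x
      simp [fibred]
    rw [hC, hIC₀.eq_univ]
    exact hasUniqueNaturalCellularMap_univ_zero.graph continuousOn_const k
  | interval a b hab =>
    obtain ⟨IC₀, S, hIC₀, hS, -, rfl⟩ := hIC.exists_eq_fibred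
    obtain ⟨k, rfl⟩ := hS rfl
    have hC : {x : Fin 1 → ℝ | x 0 ∈ Ioo a b} = fibred univ fun _ => Ioo a b := by
      ext x
      simp [fibred]
    rw [hC, hIC₀.eq_univ]
    exact hasUniqueNaturalCellularMap_univ_zero.band continuousOn_const continuousOn_const
      (fun _ _ => hab) k
  | graph C τ f _ _ hf ih =>
    obtain ⟨IC₀, S, hIC₀, -, hS, rfl⟩ := hIC.exists_eq_fibred
    obtain ⟨k, rfl⟩ := hS (by simp)
    exact (ih (by simpa using hIC₀)).graph hf k
  | band C τ f g _ _ hf hg hfg ih =>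
    obtain ⟨IC₀, S, hIC₀, hS, -, rfl⟩ := hIC.exists_eq_fibred
    obtain ⟨k, rfl⟩ := hS (by simp)
    exact (ih (by simpa using hIC₀)).band hf hg hfg k

theorem natural_cellular_map_exists_unique_general {ℓ : ℕ}
    (C : Set (Fin ℓ → ℝ)) (τ : Fin ℓ → Bool) (hC : IsCell ℓ C τ)
    (IC : Set (Fin ℓ → ℝ)) (hIC : CellTyped IC τ) :
    ∃ φ : (Fin ℓ → ℝ) → (Fin ℓ → ℝ),
      (φ '' IC = C ∧ Precellular IC φ ∧ ContinuousOn φ IC ∧ NaturalOn IC φ) ∧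
      ∀ φ' : (Fin ℓ → ℝ) → (Fin ℓ → ℝ),
        (φ' '' IC = C ∧ Precellular IC φ' ∧ ContinuousOn φ' IC ∧ NaturalOn IC φ') →
        Set.EqOn φ φ' IC :=
  hC.hasUniqueNaturalCellularMap hIC

/-- For every cell `C` of length ℓ and every integer cell `𝒞` of the same type, there is a
unique surjective natural cellular map `A^{𝒞,C} : 𝒞 → C`. -/
theorem natural_cellular_map_exists_unique {ℓ : ℕ} (hl : 1 ≤ ℓ)
    (C : Set (Fin ℓ → ℝ)) (τ : Fin ℓ → Bool) (hC : IsCell ℓ C τ)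
    (IC : Set (Fin ℓ → ℝ)) (hIC : CellTyped IC τ) :
    ∃ φ : (Fin ℓ → ℝ) → (Fin ℓ → ℝ),
      (φ '' IC = C ∧ Precellular IC φ ∧ ContinuousOn φ IC ∧ NaturalOn IC φ) ∧
      ∀ φ' : (Fin ℓ → ℝ) → (Fin ℓ → ℝ),
        (φ' '' IC = C ∧ Precellular IC φ' ∧ ContinuousOn φ' IC ∧ NaturalOn IC φ') →
        Set.EqOn φ φ' IC :=
  natural_cellular_map_exists_unique_general C τ hC IC hIC

end Forts
end
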